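/- arXiv:1702.02828 — 5 statements merged into one kernel-verified Lean document; each statement's English description precedes it below -/
import Mathlib

section
/- Let M and L be integers with M ≥ 10 and 1 ≤ L ≤ M/10, and let S = {ω ∈ {0,1}^M : ‖ω‖₁ = L}. Then there exists a subset A ⊆ S with cardinality at least √(binomial(M, L)) such that the Hamming distance between any two distinct elements of A is at least L/5. -/
/-!
Let `t = ⌊L / 10⌋` and take a largest family `A` of weight-`L` words whose pairwise distances
exceed `2t + 1`; such distances are at least `L / 5`. By maximality, the Hamming balls of radius
`2t + 1` around `A` cover all `C(M, L)` weight-`L` words. Two weight-`L` words at distance `2j`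
differ by moving `j` ones out of the support and `j` ones into its complement, so such a ball
holds `B = ∑_{j ≤ t} C(L, j) C(M - L, j)` words, and `C(M, L) ≤ |A| B`. It remains to show
`B² ≤ C(M, L)`: we have `B ≤ (t + 1) C(L, t) C(M - L, t)`, while `C(L, t) C(M - L, L - t)` is a
single term of Vandermonde's sum for `C(M, L)`, and `(t + 1)² C(L, t) C(n, t)² ≤ C(n, L - t)`
for `n ≥ 9L` follows from `(n / k)^k ≤ C(n, k) ≤ n^k / k!` and `t^t ≤ 3^t t!`.
-/

open Finset
open scoped Nat

namespace Nat

theorem pow_self_le_three_pow_mul_factorial (t : ℕ) : t ^ t ≤ 3 ^ t * t ! := by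
  have h : (t : ℝ) ^ t / t ! ≤ 3 ^ t :=
    calc (t : ℝ) ^ t / t ! ≤ Real.exp t := Real.pow_div_factorial_le_exp _ t.cast_nonneg t
      _ = Real.exp 1 ^ t := by rw [← Real.exp_nat_mul, mul_one]
      _ ≤ 3 ^ t := by gcongr; linarith [Real.exp_one_lt_d9]
  rw [div_le_iff₀ (by positivity)] at h
  exact_mod_cast h

theorem factorial_mul_choose_le_pow (n k : ℕ) : k ! * n.choose k ≤ n ^ k := by
  rw [← descFactorial_eq_factorial_mul_choose]
  exact descFactorial_le_pow n k

theorem pow_le_pow_mul_choose {n k : ℕ} (h : k ≤ n) : n ^ k ≤ k ^ k * n.choose k := by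
  have hprod : n ^ k * k ! ≤ k ^ k * n.descFactorial k := by
    rw [← descFactorial_self, descFactorial_eq_prod_range, descFactorial_eq_prod_range,
      ← card_range k, ← prod_const, ← prod_const, card_range, ← prod_mul_distrib,
      ← prod_mul_distrib]
    refine prod_le_prod' fun i hi => ?_
    have hik : i < k := mem_range.mp hi
    zify [hik.le, hik.le.trans h]
    nlinarith
  rw [descFactorial_eq_factorial_mul_choose] at hprod
  exact Nat.le_of_mul_le_mul_right (by linarith [hprod]) (factorial_pos k)

theorem choose_le_choose_of_le_half {n j k : ℕ} (hjk : j ≤ k) (hk : k ≤ n / 2) :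
    n.choose j ≤ n.choose k := by
  induction hjk using Nat.decreasingInduction with
  | self => exact le_rfl
  | of_succ m hm ih => exact (choose_le_succ_of_lt_half_left (by omega)).trans ih

theorem choose_mul_choose_le_add_choose {m n k : ℕ} (i : ℕ) (hi : i ≤ k) :
    m.choose i * n.choose (k - i) ≤ (m + n).choose k := by
  rw [add_choose_eq]
  exact single_le_sum (a := (i, k - i)) (f := fun ij => m.choose ij.1 * n.choose ij.2)
    (fun _ _ => Nat.zero_le _) (HasAntidiagonal.mem_antidiagonal.mpr (by omega))

theorem le_sq_of_le_mul_of_sq_le {a b c : ℕ} (h₁ : c ≤ a * b) (h₂ : b ^ 2 ≤ c) :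
    c ≤ a ^ 2 := by
  rcases c.eq_zero_or_pos with rfl | hc
  · exact Nat.zero_le _
  refine Nat.le_of_mul_le_mul_left ?_ hc
  calc c * c ≤ (a * b) ^ 2 := by rw [sq]; exact Nat.mul_le_mul h₁ h₁
    _ = a ^ 2 * b ^ 2 := mul_pow a b 2
    _ ≤ a ^ 2 * c := by gcongr
    _ = c * a ^ 2 := mul_comm _ _

end Nat

theorem sq_succ_mul_pow_le_factorial_pow {t L : ℕ} (h₁ : 10 * t ≤ L) (h₂ : L < 10 * t + 10) :
    (t + 1) ^ 2 * L ^ (3 * t) ≤ t ! ^ 3 * 9 ^ (L - 3 * t) := by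
  have hL : L ^ (3 * t) ≤ 20 ^ (3 * t) * (t ^ t) ^ 3 := by
    rw [← pow_mul, mul_comm t 3, ← mul_pow]
    rcases t.eq_zero_or_pos with rfl | ht
    · simp
    · exact Nat.pow_le_pow_left (by omega) _
  have hsucc : (t + 1) ^ 2 ≤ 4 ^ t := by
    rw [show 4 ^ t = (2 ^ t) ^ 2 by rw [← pow_mul, mul_comm, pow_mul]; norm_num]
    exact Nat.pow_le_pow_left Nat.lt_two_pow_self 2
  calc (t + 1) ^ 2 * L ^ (3 * t)
      ≤ 4 ^ t * (20 ^ (3 * t) * (3 ^ t * t !) ^ 3) := by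
        gcongr
        exact hL.trans (by gcongr; exact Nat.pow_self_le_three_pow_mul_factorial t)
    _ = t ! ^ 3 * 864000 ^ t := by
        rw [mul_pow, pow_mul, ← pow_mul 3 t 3, mul_comm t 3, pow_mul,
          show 864000 = 4 * 20 ^ 3 * 3 ^ 3 by norm_num, mul_pow, mul_pow]
        ring
    _ ≤ t ! ^ 3 * 9 ^ (7 * t) := by rw [pow_mul]; gcongr; norm_num
    _ ≤ t ! ^ 3 * 9 ^ (L - 3 * t) := by gcongr <;> omega

theorem sq_succ_mul_choose_mul_sq_choose_le {t L n : ℕ} (h₁ : 10 * t ≤ L)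
    (h₂ : L < 10 * t + 10) (hn : 9 * L ≤ n) :
    (t + 1) ^ 2 * L.choose t * n.choose t ^ 2 ≤ n.choose (L - t) := by
  have hsplit : L ^ t * L ^ (L - t) = L ^ (3 * t) * L ^ (L - 3 * t) := by
    rw [← pow_add, ← pow_add]; congr 1; omega
  have hn_pow : n ^ (L - 3 * t) * n ^ (2 * t) = n ^ (L - t) := by
    rw [← pow_add]; congr 1; omega
  refine Nat.le_of_mul_le_mul_left ?_
    (Nat.mul_pos (pow_pos t.factorial_pos 3) (Nat.pow_self_pos (n := L - t)))
  calc t ! ^ 3 * (L - t) ^ (L - t) * ((t + 1) ^ 2 * L.choose t * n.choose t ^ 2)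
      = (t + 1) ^ 2 * (t ! * L.choose t) * (t ! * n.choose t) ^ 2 * (L - t) ^ (L - t) := by
        ring
    _ ≤ (t + 1) ^ 2 * L ^ t * (n ^ t) ^ 2 * L ^ (L - t) := by
        gcongr
        · exact Nat.factorial_mul_choose_le_pow L t
        · exact Nat.factorial_mul_choose_le_pow n t
        · omega
    _ = (t + 1) ^ 2 * (L ^ t * L ^ (L - t)) * (n ^ t) ^ 2 := by ring
    _ = (t + 1) ^ 2 * L ^ (3 * t) * L ^ (L - 3 * t) * n ^ (2 * t) := by
        rw [hsplit, ← pow_mul, mul_comm t 2]; ring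
    _ ≤ t ! ^ 3 * 9 ^ (L - 3 * t) * L ^ (L - 3 * t) * n ^ (2 * t) := by
        gcongr ?_ * _ * _; exact sq_succ_mul_pow_le_factorial_pow h₁ h₂
    _ = t ! ^ 3 * (9 * L) ^ (L - 3 * t) * n ^ (2 * t) := by rw [mul_pow]; ring
    _ ≤ t ! ^ 3 * n ^ (L - 3 * t) * n ^ (2 * t) := by gcongr
    _ = t ! ^ 3 * n ^ (L - t) := by rw [mul_assoc, hn_pow]
    _ ≤ t ! ^ 3 * ((L - t) ^ (L - t) * n.choose (L - t)) := by
        gcongr; exact Nat.pow_le_pow_mul_choose (by omega)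
    _ = t ! ^ 3 * (L - t) ^ (L - t) * n.choose (L - t) := by ring

theorem sq_sum_choose_mul_choose_le {t L n : ℕ} (h₁ : 10 * t ≤ L) (h₂ : L < 10 * t + 10)
    (hn : 9 * L ≤ n) :
    (∑ j ∈ range (t + 1), L.choose j * n.choose j) ^ 2 ≤ (L + n).choose L := by
  have hsum : ∑ j ∈ range (t + 1), L.choose j * n.choose j ≤
      (t + 1) * (L.choose t * n.choose t) := by
    simpa using sum_le_card_nsmul (range (t + 1)) _ _ fun j hj =>
      have hjt : j ≤ t := Nat.lt_succ_iff.1 (mem_range.1 hj)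
      Nat.mul_le_mul (Nat.choose_le_choose_of_le_half hjt (by omega))
        (Nat.choose_le_choose_of_le_half hjt (by omega))
  calc (∑ j ∈ range (t + 1), L.choose j * n.choose j) ^ 2
      ≤ ((t + 1) * (L.choose t * n.choose t)) ^ 2 := by gcongr
    _ = L.choose t * ((t + 1) ^ 2 * L.choose t * n.choose t ^ 2) := by ring
    _ ≤ L.choose t * n.choose (L - t) := by
        gcongr; exact sq_succ_mul_choose_mul_sq_choose_le h₁ h₂ hn
    _ ≤ (L + n).choose L := Nat.choose_mul_choose_le_add_choose t (by omega)

section HammingPacking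

variable {ι : Type*} [Fintype ι] {β : ι → Type*} [∀ i, DecidableEq (β i)]

theorem exists_subset_pairwise_lt_hammingDist_covering (S : Finset (∀ i, β i)) (r : ℕ) :
    ∃ A ⊆ S, (A : Set (∀ i, β i)).Pairwise (fun x y => r < hammingDist x y) ∧
      ∀ ω ∈ S, ∃ a ∈ A, hammingDist a ω ≤ r := by
  classical
  let codes : Finset (Finset (∀ i, β i)) :=
    {A ∈ S.powerset | (A : Set (∀ i, β i)).Pairwise fun x y => r < hammingDist x y}
  obtain ⟨A, hA, hmax⟩ := exists_max_image codes card ⟨∅, by simp [codes]⟩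
  rw [mem_filter, mem_powerset] at hA
  refine ⟨A, hA.1, hA.2, fun ω hω => ?_⟩
  by_contra! hfar
  have hωA : ω ∉ A := fun h => by simpa using hfar ω h
  have hins : insert ω A ∈ codes := by
    rw [mem_filter, mem_powerset, coe_insert, Set.pairwise_insert]
    exact ⟨insert_subset hω hA.1, hA.2, fun b hb _ =>
      ⟨hammingDist_comm b ω ▸ hfar b hb, hfar b hb⟩⟩
  have := hmax _ hins
  rw [card_insert_of_notMem hωA] at this
  omega

theorem exists_subset_pairwise_lt_hammingDist_card_le_mul (S : Finset (∀ i, β i)) (r B : ℕ)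
    (hball : ∀ a ∈ S, #{ω ∈ S | hammingDist a ω ≤ r} ≤ B) :
    ∃ A ⊆ S, (A : Set (∀ i, β i)).Pairwise (fun x y => r < hammingDist x y) ∧
      #S ≤ #A * B := by
  classical
  obtain ⟨A, hAS, hsep, hcover⟩ := exists_subset_pairwise_lt_hammingDist_covering S r
  refine ⟨A, hAS, hsep, ?_⟩
  calc #S ≤ #(A.biUnion fun a => {ω ∈ S | hammingDist a ω ≤ r}) :=
        card_le_card fun ω hω => by
          obtain ⟨a, ha, hd⟩ := hcover ω hω
          exact mem_biUnion.2 ⟨a, ha, mem_filter.2 ⟨hω, hd⟩⟩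
    _ ≤ #A * B := card_biUnion_le_card_mul _ _ _ fun a ha => hball a (hAS ha)

end HammingPacking

section ConstantWeight

variable {ι : Type*} [Fintype ι]

def ones (ω : ι → Bool) : Finset ι := {k | ω k = true}

theorem ones_injective : Function.Injective (ones : (ι → Bool) → Finset ι) := by
  intro ω ω' h
  funext k
  simpa [ones] using congrArg (k ∈ ·) h

variable [DecidableEq ι]

variable (ι) in
def constantWeight (L : ℕ) : Finset (ι → Bool) := {ω | #(ones ω) = L}

@[simp]
theorem mem_constantWeight {L : ℕ} {ω : ι → Bool} :
    ω ∈ constantWeight ι L ↔ #(ones ω) = L := by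
  simp [constantWeight]

theorem card_constantWeight (L : ℕ) :
    #(constantWeight ι L) = (Fintype.card ι).choose L := by
  rw [← card_univ, ← card_powersetCard]
  refine card_nbij' ones (fun s k => decide (k ∈ s)) (fun ω hω => ?_) (fun s hs => ?_)
    (fun ω _ => ?_) (fun s _ => ?_)
  · simpa using hω
  · simpa [ones] using hs
  · funext k; simp [ones]
  · ext k; simp [ones]

theorem hammingDist_eq_card_sdiff_add_card_sdiff (ω ω' : ι → Bool) :
    hammingDist ω ω' = #(ones ω \ ones ω') + #(ones ω' \ ones ω) := by
  rw [← card_union_of_disjoint disjoint_sdiff_sdiff, hammingDist]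
  congr 1
  ext k
  cases h : ω k <;> cases h' : ω' k <;> simp [ones, h, h']

theorem hammingDist_eq_two_mul_card_sdiff {ω ω' : ι → Bool} (h : #(ones ω) = #(ones ω')) :
    hammingDist ω ω' = 2 * #(ones ω \ ones ω') := by
  rw [hammingDist_eq_card_sdiff_add_card_sdiff, ← card_sdiff_comm h, two_mul]

theorem card_filter_hammingDist_le_constantWeight {L : ℕ} {a : ι → Bool}
    (ha : a ∈ constantWeight ι L) (t : ℕ) :
    #{ω ∈ constantWeight ι L | hammingDist a ω ≤ 2 * t + 1} ≤
      ∑ j ∈ range (t + 1), L.choose j * (Fintype.card ι - L).choose j := by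
  rw [mem_constantWeight] at ha
  set s := ones a with hs
  have hrecover : ∀ w : Finset ι, w \ s ∪ s \ (s \ w) = w := fun w => by
    rw [sdiff_sdiff_right_self, inf_eq_inter, inter_comm, sdiff_union_inter]
  calc _ ≤ #((range (t + 1)).biUnion fun j => powersetCard j s ×ˢ powersetCard j sᶜ) := by
        refine card_le_card_of_injOn (fun ω => (s \ ones ω, ones ω \ s)) (fun ω hω => ?_) ?_
        · rw [mem_coe, mem_filter, mem_constantWeight] at hω
          have hcard : #s = #(ones ω) := ha.trans hω.1.symm
          rw [hammingDist_eq_two_mul_card_sdiff hcard, ← hs] at hω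
          simp only [coe_biUnion, coe_range, Set.mem_iUnion, Set.mem_Iio, mem_coe, mem_product,
            mem_powersetCard]
          exact ⟨#(s \ ones ω), by omega, ⟨sdiff_subset, rfl⟩,
            ⟨fun k hk => mem_compl.2 (mem_sdiff.1 hk).2, (card_sdiff_comm hcard).symm⟩⟩
        · intro ω _ ω' _ h
          simp only [Prod.mk.injEq] at h
          exact ones_injective (by rw [← hrecover (ones ω), h.1, h.2, hrecover])
    _ ≤ ∑ j ∈ range (t + 1), #(powersetCard j s ×ˢ powersetCard j sᶜ) := card_biUnion_le
    _ = _ := by simp only [card_product, card_powersetCard, card_compl, ha]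

end ConstantWeight

theorem constant_weight_code_general (M L : ℕ) (hLM : (L : ℝ) ≤ (M : ℝ) / 10) :
    ∃ A : Finset (Fin M → Bool),
      (∀ ω ∈ A, (Finset.univ.filter fun k => ω k = true).card = L) ∧
      Real.sqrt (Nat.choose M L) ≤ (A.card : ℝ) ∧
      ∀ ω ∈ A, ∀ ω' ∈ A, ω ≠ ω' → (L : ℝ) / 5 ≤ (hammingDist ω ω' : ℝ) := by
  have h10L : 10 * L ≤ M := by exact_mod_cast (by linarith : (10 * L : ℝ) ≤ M)
  set t := L / 10
  obtain ⟨A, hAS, hsep, hcard⟩ := exists_subset_pairwise_lt_hammingDist_card_le_mul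
    (constantWeight (Fin M) L) (2 * t + 1) _
    fun a ha => card_filter_hammingDist_le_constantWeight ha t
  rw [card_constantWeight, Fintype.card_fin] at hcard
  have hball : (∑ j ∈ range (t + 1), L.choose j * (M - L).choose j) ^ 2 ≤ M.choose L := by
    simpa [Nat.add_sub_cancel' (by omega : L ≤ M)] using
      sq_sum_choose_mul_choose_le (t := t) (L := L) (n := M - L) (by omega) (by omega) (by omega)
  refine ⟨A, fun ω hω => mem_constantWeight.1 (hAS hω), ?_, fun ω hω ω' hω' hne => ?_⟩
  · rw [Real.sqrt_le_left (by positivity)]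
    exact_mod_cast Nat.le_sq_of_le_mul_of_sq_le hcard hball
  · have hfar : 2 * t + 1 < hammingDist ω ω' := hsep hω hω' hne
    rw [div_le_iff₀ (by norm_num)]
    exact_mod_cast (by omega : L ≤ hammingDist ω ω' * 5)

/-- Gilbert–Varshamov-type lemma for constant weight codes (Lemma 1): for `M ≥ 10` and
`1 ≤ L ≤ M/10`, inside the set of binary strings of length `M` and Hamming weight `L`
there is a subset of cardinality at least `√(M choose L)` whose elements are pairwise at
Hamming distance at least `L/5`. -/
theorem constant_weight_code (M L : ℕ) (hM : 10 ≤ M) (hL1 : 1 ≤ L)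
    (hLM : (L : ℝ) ≤ (M : ℝ) / 10) :
    ∃ A : Finset (Fin M → Bool),
      (∀ ω ∈ A, (Finset.univ.filter fun k => ω k = true).card = L) ∧
      Real.sqrt (Nat.choose M L) ≤ (A.card : ℝ) ∧
      ∀ ω ∈ A, ∀ ω' ∈ A, ω ≠ ω' → (L : ℝ) / 5 ≤ (hammingDist ω ω' : ℝ) :=
  constant_weight_code_general M L hLM
end

section
/- For every real v > 0 and every real z with |z| ≤ v, sin z = z + (v²/2) ∫₀¹ sin(v t) [clip(−2z/v − 2t − 1) − clip(2z/v − 2t − 1)] dt, where clip(z) = sgn(z)·min{1, |z|} and sgn(z) = 1 if z > 0 and −1 otherwise. -/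
/-!
Put `c = z / v`, so `|c| ≤ 1`. For `t ∈ [0, 1]` both clipped arguments have the form `2a - 1`
with `a ≤ 1`, where clipping only acts from below: `clip (2a - 1) = 2a⁺ - 1`. The kernel is
therefore `2((-c - t)⁺ - (c - t)⁺)`, and at most one of the two parts is nonzero on `[0, 1]`.
What remains is Taylor's formula with integral remainder for `sin`,
`sin x = x - ∫₀ˣ (x - s) sin s ds`, rescaled by `s = vt`.
-/

open MeasureTheory

noncomputable section

/-- The signum function: `sgn z = 1` if `z > 0` and `−1` otherwise. -/
def sgn (z : ℝ) : ℝ := if 0 < z then 1 else -1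

/-- The clipped linear activation `clip z = sgn(z) · min {1, |z|}`. -/
def clip (z : ℝ) : ℝ := sgn z * min 1 |z|

open Set Real

lemma clip_two_mul_sub_one {a : ℝ} (ha : a ≤ 1) : clip (2 * a - 1) = 2 * max a 0 - 1 := by
  unfold clip sgn
  split_ifs with h
  · rw [abs_of_pos h, min_eq_right (by linarith), max_eq_left (by linarith)]
    ring
  · rw [abs_of_nonpos (not_lt.1 h)]
    rcases le_total a 0 with ha0 | ha0
    · rw [min_eq_left (by linarith), max_eq_right ha0]
      ring
    · rw [min_eq_right (by linarith), max_eq_left ha0]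
      ring

lemma setIntegral_Icc_max_sub_mul (f : ℝ → ℝ) (a b c : ℝ) :
    ∫ t in Icc a b, max (c - t) 0 * f t = ∫ t in Icc a (min b c), (c - t) * f t := by
  have hind : (fun t => max (c - t) 0 * f t) = (Iic c).indicator (fun t => (c - t) * f t) := by
    ext t
    by_cases ht : t ≤ c
    · simp [ht]
    · simp [ht, max_eq_right (sub_nonpos.2 (not_le.1 ht).le)]
  have hinter : Icc a b ∩ Iic c = Icc a (min b c) := by
    ext t
    simp [and_assoc]
  rw [hind, setIntegral_indicator measurableSet_Iic, hinter]

lemma integral_sub_mul_sin_mul {v : ℝ} (hv : v ≠ 0) (c : ℝ) :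
    ∫ t in (0 : ℝ)..c, (c - t) * sin (v * t) = c / v - sin (v * c) / v ^ 2 := by
  have hderiv (t : ℝ) : HasDerivAt (fun t => (t - c) * cos (v * t) / v - sin (v * t) / v ^ 2)
      ((c - t) * sin (v * t)) t := by
    have hvt : HasDerivAt (fun t => v * t) v t := by simpa using (hasDerivAt_id t).const_mul v
    have hcos : HasDerivAt (fun t => cos (v * t)) (-sin (v * t) * v) t :=
      (hasDerivAt_cos _).comp t hvt
    have hsin : HasDerivAt (fun t => sin (v * t)) (cos (v * t) * v) t :=
      (hasDerivAt_sin _).comp t hvt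
    have hlin : HasDerivAt (fun t => t - c) 1 t := (hasDerivAt_id' t).sub_const c
    refine ((hlin.mul hcos).div_const v).sub (hsin.div_const (v ^ 2)) |>.congr_deriv ?_
    field_simp
    ring
  rw [intervalIntegral.integral_eq_sub_of_hasDerivAt (fun t _ => hderiv t)
    (Continuous.intervalIntegrable (by fun_prop) _ _)]
  simp only [sub_self, zero_mul, zero_div, zero_sub, mul_zero, cos_zero, mul_one, sin_zero,
    sub_zero]
  ring

lemma setIntegral_Icc_zero_sub_mul_sin_mul {v c : ℝ} (hv : v ≠ 0) (hc : 0 ≤ c) :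
    ∫ t in Icc 0 c, (c - t) * sin (v * t) = c / v - sin (v * c) / v ^ 2 := by
  rw [integral_Icc_eq_integral_Ioc, ← intervalIntegral.integral_of_le hc,
    integral_sub_mul_sin_mul hv]

lemma setIntegral_Icc_of_le {E : Type*} [NormedAddCommGroup E] [NormedSpace ℝ E] (f : ℝ → E)
    {a b : ℝ} (hab : b ≤ a) : ∫ t in Icc a b, f t = 0 :=
  setIntegral_measure_zero f (by simp [hab])

lemma setIntegral_Icc_neg_sub_setIntegral_Icc {v : ℝ} (hv : v ≠ 0) (c : ℝ) :
    (∫ t in Icc 0 (-c), (-c - t) * sin (v * t)) - ∫ t in Icc 0 c, (c - t) * sin (v * t) =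
      sin (v * c) / v ^ 2 - c / v := by
  rcases le_total 0 c with hc | hc
  · rw [setIntegral_Icc_of_le _ (neg_nonpos.2 hc), setIntegral_Icc_zero_sub_mul_sin_mul hv hc]
    ring
  · rw [setIntegral_Icc_of_le _ hc, setIntegral_Icc_zero_sub_mul_sin_mul hv (neg_nonneg.2 hc),
      mul_neg, sin_neg]
    ring

/-- The sine function as a linear part plus an integral combination of clipped-linear
ridge functions: for `|z| ≤ v`,
`sin z = z + (v²/2)∫₀¹ sin(vt)[clip(−2z/v − 2t − 1) − clip(2z/v − 2t − 1)] dt`. -/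
theorem sin_eq_integral_clip (v : ℝ) (hv : 0 < v) (z : ℝ) (hz : |z| ≤ v) :
    Real.sin z =
      z + (v ^ 2 / 2) * ∫ t in Set.Icc (0 : ℝ) 1,
        Real.sin (v * t) * (clip (-2 * z / v - 2 * t - 1) - clip (2 * z / v - 2 * t - 1)) := by
  set c := z / v with hc
  obtain ⟨hc_ge, hc_le⟩ : -1 ≤ c ∧ c ≤ 1 :=
    abs_le.1 (by rwa [abs_div, abs_of_pos hv, div_le_one hv])
  have hkernel : EqOn
      (fun t => sin (v * t) * (clip (-2 * z / v - 2 * t - 1) - clip (2 * z / v - 2 * t - 1)))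
      (fun t => 2 * (max (-c - t) 0 * sin (v * t)) - 2 * (max (c - t) 0 * sin (v * t)))
      (Icc 0 1) := by
    intro t ht
    have h1 : -c - t ≤ 1 := by linarith [ht.1]
    have h2 : c - t ≤ 1 := by linarith [ht.1]
    dsimp only
    rw [show -2 * z / v - 2 * t - 1 = 2 * (-c - t) - 1 by ring,
      show 2 * z / v - 2 * t - 1 = 2 * (c - t) - 1 by ring,
      clip_two_mul_sub_one h1, clip_two_mul_sub_one h2]
    ring
  have hint (s : ℝ) : IntegrableOn (fun t => 2 * (max (s - t) 0 * sin (v * t))) (Icc 0 1) :=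
    (by fun_prop : Continuous _).integrableOn_Icc
  rw [setIntegral_congr_fun measurableSet_Icc hkernel, integral_sub (hint _) (hint _),
    integral_const_mul, integral_const_mul, setIntegral_Icc_max_sub_mul,
    setIntegral_Icc_max_sub_mul, min_eq_right (neg_le.2 hc_ge),
    min_eq_right hc_le, ← mul_sub, setIntegral_Icc_neg_sub_setIntegral_Icc hv.ne']
  rw [hc]
  field_simp
  ring

end
end

section
/- Let d, M, L, ℓ be positive integers, v1 > 0, and let θ_1, …, θ_M be unit vectors in ℝ^d (‖θ_k‖₂ = 1) such that |θ_i·θ_j| ≤ 9/10 for all i ≠ j. For ω ∈ {0,1}^M define f_ω(x) = (v1/L) Σ_{k=1}^M ω_k φℓ(θ_k·x) where φℓ = Hℓ/√(ℓ!) is the standardized probabilists' Hermite polynomial. Let X ~ N(0, I_d) and let ω, ω' ∈ {0,1}^M each have Hamming weight L with Hamming distance at least L/5. If ℓ > log(4L)/log(10/9), then E[(f_ω(X) − f_{ω'}(X))²] ≥ v1²/(10L). -/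
open MeasureTheory ProbabilityTheory Real Finset

noncomputable section

/-- The probabilists' Hermite polynomial `Hℓ(z) = (−1)^ℓ e^{z²/2} (d^ℓ/dz^ℓ) e^{−z²/2}`. -/
def hermiteH (ℓ : ℕ) (z : ℝ) : ℝ :=
  (-1 : ℝ) ^ ℓ * Real.exp (z ^ 2 / 2) * iteratedDeriv ℓ (fun t => Real.exp (-t ^ 2 / 2)) z

/-- The standardized Hermite polynomial `φℓ = Hℓ/√(ℓ!)`. -/
def stdHermite (ℓ : ℕ) (z : ℝ) : ℝ := hermiteH ℓ z / Real.sqrt (Nat.factorial ℓ)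

/-- The standard Gaussian distribution `N(0, I_d)` on `ℝ^d`. -/
def stdGaussian (d : ℕ) : Measure (Fin d → ℝ) :=
  Measure.pi fun _ => gaussianReal 0 1

/-!
Gaussian integration by parts (Stein's identity `E[Xᵢ g(X)] = E[∂ᵢ g(X)]`), together with
`Hₙ₊₁ = X Hₙ - Hₙ'` and `Hₙ₊₁' = (n + 1) Hₙ`, gives `E[Hₙ(a·X) Hₙ(b·X)] = n! (a·b)ⁿ` for a unit
vector `a`. Hence `E[(f_ω - f_ω')²] = (v1/L)² Σ_{k,k'} c_k c_k' (θ_k·θ_k')^ℓ` with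
`c = ω - ω' ∈ {-1, 0, 1}^M`. The diagonal contributes the Hamming distance `s ≥ L/5`, and since
`s ≤ 2L` the off-diagonal terms are at most `(9/10)^ℓ s² ≤ s²/(4L) ≤ s/2` in absolute value,
which leaves at least `s/2 ≥ L/10`.
-/

open scoped ENNReal NNReal Nat
open Polynomial

namespace Polynomial

theorem derivative_hermite_succ (n : ℕ) :
    derivative (hermite (n + 1)) = (n + 1 : ℤ[X]) * hermite n := by
  induction n with
  | zero => simp
  | succ n ih =>
    rw [hermite_succ (n + 1), derivative_sub, derivative_mul, derivative_X, ih, derivative_mul,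
      hermite_succ n]
    simp only [derivative_natCast, derivative_add, derivative_one]
    push_cast
    ring

end Polynomial

def hermiteReal (n : ℕ) : ℝ[X] := (hermite n).map (Int.castRingHom ℝ)

theorem hermiteReal_succ (n : ℕ) :
    hermiteReal (n + 1) = X * hermiteReal n - derivative (hermiteReal n) := by
  simp [hermiteReal, hermite_succ, derivative_map]

theorem derivative_hermiteReal_succ (n : ℕ) :
    derivative (hermiteReal (n + 1)) = (n + 1 : ℝ[X]) * hermiteReal n := by
  rw [hermiteReal, hermiteReal, derivative_map, derivative_hermite_succ, Polynomial.map_mul]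
  simp

theorem hermiteH_eq_eval_hermiteReal (n : ℕ) (z : ℝ) : hermiteH n z = (hermiteReal n).eval z := by
  rw [hermiteReal, eval_map, ← algebraMap_int_eq, ← aeval_def, hermite_eq_deriv_gaussian',
    hermiteH, iteratedDeriv_eq_iterate]
  simp only [neg_div]
  ring

section FiniteMoments

variable {α : Type*} [MeasurableSpace α] {μ : Measure α}

def HasFiniteMoments (f : α → ℝ) (μ : Measure α) : Prop := ∀ p : ℝ≥0, MemLp f p μ

theorem ENNReal.holderTriple_two_mul (p : ℝ≥0∞) : ENNReal.HolderTriple (2 * p) (2 * p) p where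
  inv_add_inv_eq_inv := by
    rw [← two_mul, ENNReal.mul_inv (by simp) (by simp), ← mul_assoc,
      ENNReal.mul_inv_cancel (by simp) (by simp), one_mul]

theorem hasFiniteMoments_const [IsFiniteMeasure μ] (c : ℝ) :
    HasFiniteMoments (fun _ => c) μ := fun _ => memLp_const c

namespace HasFiniteMoments

variable {f g : α → ℝ}

theorem integrable (hf : HasFiniteMoments f μ) : Integrable f μ :=
  memLp_one_iff_integrable.1 (by simpa using hf 1)

theorem add (hf : HasFiniteMoments f μ) (hg : HasFiniteMoments g μ) :
    HasFiniteMoments (fun x => f x + g x) μ := fun p => (hf p).add (hg p)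

theorem const_mul (hf : HasFiniteMoments f μ) (c : ℝ) :
    HasFiniteMoments (fun x => c * f x) μ := fun p => (hf p).const_mul c

theorem mul (hf : HasFiniteMoments f μ) (hg : HasFiniteMoments g μ) :
    HasFiniteMoments (fun x => f x * g x) μ := fun p => by
  have := ENNReal.holderTriple_two_mul p
  have h2 : ((2 * p : ℝ≥0) : ℝ≥0∞) = 2 * p := by push_cast; rfl
  have hf2 := hf (2 * p)
  have hg2 := hg (2 * p)
  rw [h2] at hf2 hg2
  exact hg2.mul' hf2

theorem pow [IsFiniteMeasure μ] (hf : HasFiniteMoments f μ) (n : ℕ) :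
    HasFiniteMoments (fun x => f x ^ n) μ := by
  induction n with
  | zero => simpa using hasFiniteMoments_const 1
  | succ n ih => simpa [pow_succ] using ih.mul hf

theorem polynomial_eval [IsFiniteMeasure μ] (hf : HasFiniteMoments f μ) (P : Polynomial ℝ) :
    HasFiniteMoments (fun x => P.eval (f x)) μ := by
  induction P using Polynomial.induction_on' with
  | add P Q hP hQ => simpa using hP.add hQ
  | monomial n c => simpa using (hf.pow n).const_mul c

theorem finsetSum {ι : Type*} (s : Finset ι) {f : ι → α → ℝ}
    (hf : ∀ i ∈ s, HasFiniteMoments (f i) μ) : HasFiniteMoments (fun x => ∑ i ∈ s, f i x) μ :=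
  fun p => memLp_finsetSum s fun i hi => hf i hi p

end HasFiniteMoments

end FiniteMoments

theorem integrable_gaussianReal_iff {m : ℝ} {v : ℝ≥0} (hv : v ≠ 0) {f : ℝ → ℝ} :
    Integrable f (gaussianReal m v) ↔ Integrable (fun x => gaussianPDFReal m v x * f x) := by
  rw [gaussianReal_of_var_ne_zero _ hv, gaussianPDF_def,
    integrable_withDensity_iff_integrable_smul' (by fun_prop) (ae_of_all _ fun _ => by simp)]
  simp [ENNReal.toReal_ofReal (gaussianPDFReal_nonneg m v _)]

theorem hasDerivAt_gaussianPDFReal_zero_one (x : ℝ) :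
    HasDerivAt (gaussianPDFReal 0 1) (-x * gaussianPDFReal 0 1 x) x := by
  have h : HasDerivAt (fun x : ℝ => -(x - 0) ^ 2 / (2 * ((1 : ℝ≥0) : ℝ))) (-x) x :=
    ((((hasDerivAt_id' x).sub_const 0).fun_pow 2).fun_neg.div_const _).congr_deriv (by norm_num [neg_div])
  unfold gaussianPDFReal
  exact (h.exp.const_mul _).congr_deriv (by ring)

-- Stein's identity: integrate `(φ f)' = φ f' - x φ f` over `ℝ`, where `φ` is the Gaussian density.
theorem integral_mul_gaussianReal_eq_integral_deriv {f f' : ℝ → ℝ}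
    (hderiv : ∀ x, HasDerivAt f (f' x) x) (hf : Integrable f (gaussianReal 0 1))
    (hxf : Integrable (fun x => x * f x) (gaussianReal 0 1))
    (hf' : Integrable f' (gaussianReal 0 1)) :
    ∫ x, x * f x ∂gaussianReal 0 1 = ∫ x, f' x ∂gaussianReal 0 1 := by
  rw [integrable_gaussianReal_iff one_ne_zero] at hf hxf hf'
  have hboundary : ∫ x, (gaussianPDFReal 0 1 x * f' x - gaussianPDFReal 0 1 x * (x * f x)) = 0 :=
    integral_eq_zero_of_hasDerivAt_of_integrable
      (fun x => ((hasDerivAt_gaussianPDFReal_zero_one x).fun_mul (hderiv x)).congr_deriv (by ring))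
      (hf'.sub hxf) hf
  rw [integral_sub hf' hxf, sub_eq_zero] at hboundary
  simp only [integral_gaussianReal_eq_integral_smul one_ne_zero, smul_eq_mul, hboundary]

instance (d : ℕ) : IsProbabilityMeasure (stdGaussian d) := by
  unfold _root_.stdGaussian; infer_instance

theorem hasFiniteMoments_apply_stdGaussian {d : ℕ} (j : Fin d) :
    HasFiniteMoments (fun x => x j) (stdGaussian d) := fun p =>
  (memLp_id_gaussianReal p).comp_measurePreserving (measurePreserving_eval _ j)

theorem hasFiniteMoments_dotProduct_stdGaussian {d : ℕ} (a : Fin d → ℝ) :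
    HasFiniteMoments (fun x => a ⬝ᵥ x) (stdGaussian d) :=
  HasFiniteMoments.finsetSum _ fun j _ => (hasFiniteMoments_apply_stdGaussian j).const_mul (a j)

theorem measurePreserving_insertNth_stdGaussian {n : ℕ} (i : Fin (n + 1)) :
    MeasurePreserving (fun p : ℝ × (Fin n → ℝ) => i.insertNth p.1 p.2)
      ((gaussianReal 0 1).prod (stdGaussian n)) (stdGaussian (n + 1)) :=
  (measurePreserving_piFinSuccAbove (fun _ => gaussianReal 0 1) i).symm

theorem integral_stdGaussian_succ {n : ℕ} (i : Fin (n + 1)) {F : (Fin (n + 1) → ℝ) → ℝ}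
    (hF : Integrable F (stdGaussian (n + 1))) :
    ∫ x, F x ∂stdGaussian (n + 1) =
      ∫ y, ∫ t, F (i.insertNth t y) ∂gaussianReal 0 1 ∂stdGaussian n := by
  have he := measurePreserving_insertNth_stdGaussian i
  rw [← he.integral_comp (MeasurableEquiv.piFinSuccAbove (fun _ => ℝ) i).symm.measurableEmbedding]
  exact integral_prod_symm _ (he.integrable_comp_of_integrable hF)

theorem integral_apply_mul_stdGaussian {d : ℕ} (i : Fin d) {g g' : (Fin d → ℝ) → ℝ}
    (hderiv : ∀ x, HasDerivAt (fun t => g (Function.update x i t)) (g' x) (x i))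
    (hg : Integrable g (stdGaussian d)) (hxg : Integrable (fun x => x i * g x) (stdGaussian d))
    (hg' : Integrable g' (stdGaussian d)) :
    ∫ x, x i * g x ∂stdGaussian d = ∫ x, g' x ∂stdGaussian d := by
  obtain ⟨n, rfl⟩ := Nat.exists_eq_add_one_of_ne_zero i.pos.ne'
  have he := measurePreserving_insertNth_stdGaussian i
  rw [integral_stdGaussian_succ i hxg, integral_stdGaussian_succ i hg']
  have slice := fun {F : (Fin (n + 1) → ℝ) → ℝ} (hF : Integrable F (stdGaussian (n + 1))) =>
    (he.integrable_comp_of_integrable hF).prod_left_ae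
  refine integral_congr_ae ?_
  filter_upwards [slice hg, slice hxg, slice hg'] with y hgy hxgy hgy'
  simp only [Function.comp_apply, Fin.insertNth_apply_same] at hgy hxgy hgy' ⊢
  refine integral_mul_gaussianReal_eq_integral_deriv (fun t => ?_) hgy hxgy hgy'
  simpa [Fin.update_insertNth] using hderiv (i.insertNth t y)

theorem hasDerivAt_dotProduct_update {d : ℕ} (a x : Fin d → ℝ) (i : Fin d) :
    HasDerivAt (fun t => a ⬝ᵥ Function.update x i t) (a i) (x i) := by
  have hcoord := hasDerivAt_pi.1 (hasDerivAt_update x i (x i))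
  refine (HasDerivAt.fun_sum fun j _ => (hcoord j).const_mul (a j)).congr_deriv ?_
  exact (dotProduct_single a 1 i).trans (mul_one _)

theorem hasDerivAt_eval_dotProduct_update {d : ℕ} (P : ℝ[X]) (a x : Fin d → ℝ) (i : Fin d) :
    HasDerivAt (fun t => P.eval (a ⬝ᵥ Function.update x i t))
      (a i * (derivative P).eval (a ⬝ᵥ x)) (x i) := by
  have h := (P.hasDerivAt _).comp (x i) (hasDerivAt_dotProduct_update a x i)
  rw [Function.update_eq_self] at h
  exact h.congr_deriv (mul_comm _ _)

theorem hasFiniteMoments_ridge_mul_ridge {d : ℕ} (a b : Fin d → ℝ) (P Q : ℝ[X]) :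
    HasFiniteMoments (fun x => P.eval (a ⬝ᵥ x) * Q.eval (b ⬝ᵥ x)) (stdGaussian d) :=
  ((hasFiniteMoments_dotProduct_stdGaussian a).polynomial_eval P).mul
    ((hasFiniteMoments_dotProduct_stdGaussian b).polynomial_eval Q)

theorem integrable_ridge_mul_ridge {d : ℕ} (a b : Fin d → ℝ) (P Q : ℝ[X]) :
    Integrable (fun x => P.eval (a ⬝ᵥ x) * Q.eval (b ⬝ᵥ x)) (stdGaussian d) :=
  (hasFiniteMoments_ridge_mul_ridge a b P Q).integrable

theorem integral_apply_mul_ridge_mul_ridge {d : ℕ} (i : Fin d) (a b : Fin d → ℝ) (P Q : ℝ[X]) :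
    ∫ x, x i * (P.eval (a ⬝ᵥ x) * Q.eval (b ⬝ᵥ x)) ∂stdGaussian d =
      a i * ∫ x, (derivative P).eval (a ⬝ᵥ x) * Q.eval (b ⬝ᵥ x) ∂stdGaussian d +
        b i * ∫ x, P.eval (a ⬝ᵥ x) * (derivative Q).eval (b ⬝ᵥ x) ∂stdGaussian d := by
  have hxg : Integrable (fun x => x i * (P.eval (a ⬝ᵥ x) * Q.eval (b ⬝ᵥ x))) (stdGaussian d) :=
    ((hasFiniteMoments_apply_stdGaussian i).mul
      (hasFiniteMoments_ridge_mul_ridge a b P Q)).integrable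
  have h1 := (integrable_ridge_mul_ridge a b (derivative P) Q).const_mul (a i)
  have h2 := (integrable_ridge_mul_ridge a b P (derivative Q)).const_mul (b i)
  rw [integral_apply_mul_stdGaussian i (fun x => ?_) (integrable_ridge_mul_ridge a b P Q) hxg
    (h1.add h2), integral_add' h1 h2, integral_const_mul, integral_const_mul]
  exact ((hasDerivAt_eval_dotProduct_update P a x i).fun_mul
    (hasDerivAt_eval_dotProduct_update Q b x i)).congr_deriv
      (by simp only [Pi.add_apply, Function.update_eq_self]; ring)

theorem integral_dotProduct_mul_ridge_mul_ridge {d : ℕ} (c a b : Fin d → ℝ) (P Q : ℝ[X]) :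
    ∫ x, c ⬝ᵥ x * (P.eval (a ⬝ᵥ x) * Q.eval (b ⬝ᵥ x)) ∂stdGaussian d =
      c ⬝ᵥ a * ∫ x, (derivative P).eval (a ⬝ᵥ x) * Q.eval (b ⬝ᵥ x) ∂stdGaussian d +
        c ⬝ᵥ b * ∫ x, P.eval (a ⬝ᵥ x) * (derivative Q).eval (b ⬝ᵥ x) ∂stdGaussian d := by
  have hxg : ∀ i, Integrable (fun x => c i * (x i * (P.eval (a ⬝ᵥ x) * Q.eval (b ⬝ᵥ x))))
      (stdGaussian d) := fun i =>
    ((hasFiniteMoments_apply_stdGaussian i).mul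
      (hasFiniteMoments_ridge_mul_ridge a b P Q)).integrable.const_mul _
  calc ∫ x, c ⬝ᵥ x * (P.eval (a ⬝ᵥ x) * Q.eval (b ⬝ᵥ x)) ∂stdGaussian d
      = ∫ x, ∑ i, c i * (x i * (P.eval (a ⬝ᵥ x) * Q.eval (b ⬝ᵥ x))) ∂stdGaussian d := by
        congr with x
        rw [dotProduct, Finset.sum_mul]
        simp only [mul_assoc]
    _ = ∑ i, c i * (a i * ∫ x, (derivative P).eval (a ⬝ᵥ x) * Q.eval (b ⬝ᵥ x) ∂stdGaussian d +
        b i * ∫ x, P.eval (a ⬝ᵥ x) * (derivative Q).eval (b ⬝ᵥ x) ∂stdGaussian d) := by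
        rw [integral_finsetSum _ fun i _ => hxg i]
        simp only [integral_const_mul, integral_apply_mul_ridge_mul_ridge]
    _ = _ := by simp only [dotProduct, mul_add, Finset.sum_add_distrib, Finset.sum_mul, mul_assoc]

theorem integral_hermiteReal_mul_hermiteReal_stdGaussian {d : ℕ} (a b : Fin d → ℝ)
    (ha : a ⬝ᵥ a = 1) (n : ℕ) :
    ∫ x, (hermiteReal n).eval (a ⬝ᵥ x) * (hermiteReal n).eval (b ⬝ᵥ x) ∂stdGaussian d =
      n ! * (a ⬝ᵥ b) ^ n := by
  induction n with
  | zero => simp [hermiteReal]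
  | succ n ih =>
    have hrec : ∀ x : Fin d → ℝ,
        (hermiteReal (n + 1)).eval (a ⬝ᵥ x) * (hermiteReal (n + 1)).eval (b ⬝ᵥ x) =
          a ⬝ᵥ x * ((hermiteReal n).eval (a ⬝ᵥ x) * (hermiteReal (n + 1)).eval (b ⬝ᵥ x)) -
            (derivative (hermiteReal n)).eval (a ⬝ᵥ x) * (hermiteReal (n + 1)).eval (b ⬝ᵥ x) := by
      intro x
      rw [hermiteReal_succ n]
      simp only [eval_sub, eval_mul, eval_X]
      ring
    have hint := ((hasFiniteMoments_dotProduct_stdGaussian a).mul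
      (hasFiniteMoments_ridge_mul_ridge a b (hermiteReal n) (hermiteReal (n + 1)))).integrable
    simp_rw [hrec]
    rw [integral_sub hint (integrable_ridge_mul_ridge a b _ _),
      integral_dotProduct_mul_ridge_mul_ridge, ha, derivative_hermiteReal_succ]
    simp only [eval_mul, eval_add, eval_natCast, eval_one, mul_left_comm _ ((n : ℝ) + 1),
      integral_const_mul, ih]
    push_cast [Nat.factorial_succ]
    ring

theorem integral_sq_sum_mul {ι α : Type*} [Fintype ι] [MeasurableSpace α] {μ : Measure α}
    (c : ι → ℝ) (f : ι → α → ℝ) (hf : ∀ k k', Integrable (fun x => f k x * f k' x) μ) :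
    ∫ x, (∑ k, c k * f k x) ^ 2 ∂μ = ∑ k, ∑ k', c k * c k' * ∫ x, f k x * f k' x ∂μ := by
  have hint : ∀ k k', Integrable (fun x => c k * c k' * (f k x * f k' x)) μ :=
    fun k k' => (hf k k').const_mul _
  have hexpand : ∀ x, (∑ k, c k * f k x) ^ 2 = ∑ k, ∑ k', c k * c k' * (f k x * f k' x) :=
    fun x => by
      rw [sq, Finset.sum_mul_sum]
      exact Finset.sum_congr rfl fun k _ => Finset.sum_congr rfl fun k' _ => by ring
  simp_rw [hexpand]
  rw [integral_finsetSum _ fun k _ => integrable_finsetSum _ fun k' _ => hint k k']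
  refine Finset.sum_congr rfl fun k _ => ?_
  rw [integral_finsetSum _ fun k' _ => hint k k']
  simp only [integral_const_mul]

theorem sum_sq_sub_mul_sq_sum_abs_le {ι : Type*} [Fintype ι] [DecidableEq ι]
    (r : ι → ι → ℝ) (c : ι → ℝ) {q : ℝ} (hq : 0 ≤ q) (hdiag : ∀ k, r k k = 1)
    (hoff : ∀ k k', k ≠ k' → |r k k'| ≤ q) :
    ∑ k, c k ^ 2 - q * (∑ k, |c k|) ^ 2 ≤ ∑ k, ∑ k', c k * c k' * r k k' := by
  set E : ι → ι → ℝ := fun k k' => r k k' - if k = k' then 1 else 0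
  have hE : ∀ k k', |E k k'| ≤ q := by
    intro k k'
    by_cases h : k = k'
    · subst h; simp [E, hdiag, hq]
    · simpa [E, h] using hoff k k' h
  have hsplit :
      ∑ k, ∑ k', c k * c k' * r k k' = ∑ k, c k ^ 2 + ∑ k, ∑ k', c k * c k' * E k k' := by
    simp [E, mul_sub, Finset.sum_sub_distrib, sq]
  have hbound : |∑ k, ∑ k', c k * c k' * E k k'| ≤ q * (∑ k, |c k|) ^ 2 :=
    calc |∑ k, ∑ k', c k * c k' * E k k'| ≤ ∑ k, ∑ k', |c k| * |c k'| * q := by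
          refine (Finset.abs_sum_le_sum_abs _ _).trans (Finset.sum_le_sum fun k _ => ?_)
          refine (Finset.abs_sum_le_sum_abs _ _).trans (Finset.sum_le_sum fun k' _ => ?_)
          rw [abs_mul, abs_mul]
          exact mul_le_mul_of_nonneg_left (hE k k') (by positivity)
      _ = q * (∑ k, |c k|) ^ 2 := by
          rw [sq, Finset.sum_mul_sum, Finset.mul_sum]
          simp_rw [Finset.mul_sum]
          exact Finset.sum_congr rfl fun k _ => Finset.sum_congr rfl fun k' _ => by ring
  linarith [neg_abs_le (∑ k, ∑ k', c k * c k' * E k k')]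

theorem integral_sq_sum_hermiteReal_stdGaussian {ι : Type*} [Fintype ι] {d : ℕ}
    (θ : ι → Fin d → ℝ) (hθ : ∀ k, θ k ⬝ᵥ θ k = 1) (c : ι → ℝ) (n : ℕ) :
    ∫ x, (∑ k, c k * (hermiteReal n).eval (θ k ⬝ᵥ x)) ^ 2 ∂stdGaussian d =
      n ! * ∑ k, ∑ k', c k * c k' * (θ k ⬝ᵥ θ k') ^ n := by
  rw [integral_sq_sum_mul c _ fun k k' => integrable_ridge_mul_ridge _ _ _ _]
  simp only [integral_hermiteReal_mul_hermiteReal_stdGaussian _ _ (hθ _), Finset.mul_sum]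
  exact Finset.sum_congr rfl fun k _ => Finset.sum_congr rfl fun k' _ => by ring

section BinaryVectors

variable {ι : Type*} [Fintype ι] {ω ω' : ι → ℝ}

theorem abs_sub_eq_ite_of_mem_zero_one {a b : ℝ} (ha : a = 0 ∨ a = 1) (hb : b = 0 ∨ b = 1) :
    |a - b| = if a ≠ b then 1 else 0 := by
  rcases ha with rfl | rfl <;> rcases hb with rfl | rfl <;> norm_num

theorem sum_abs_sub_eq_card_of_mem_zero_one (hω : ∀ k, ω k = 0 ∨ ω k = 1)
    (hω' : ∀ k, ω' k = 0 ∨ ω' k = 1) :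
    ∑ k, |ω k - ω' k| = (Finset.univ.filter fun k => ω k ≠ ω' k).card := by
  simp [abs_sub_eq_ite_of_mem_zero_one (hω _) (hω' _), Finset.sum_ite]

theorem sum_sq_sub_eq_card_of_mem_zero_one (hω : ∀ k, ω k = 0 ∨ ω k = 1)
    (hω' : ∀ k, ω' k = 0 ∨ ω' k = 1) :
    ∑ k, (ω k - ω' k) ^ 2 = (Finset.univ.filter fun k => ω k ≠ ω' k).card := by
  rw [← sum_abs_sub_eq_card_of_mem_zero_one hω hω']
  refine Finset.sum_congr rfl fun k _ => ?_
  rw [← sq_abs, abs_sub_eq_ite_of_mem_zero_one (hω k) (hω' k)]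
  split_ifs <;> norm_num

theorem sum_abs_sub_le_of_nonneg (hω : ∀ k, 0 ≤ ω k) (hω' : ∀ k, 0 ≤ ω' k) :
    ∑ k, |ω k - ω' k| ≤ ∑ k, ω k + ∑ k, ω' k := by
  rw [← Finset.sum_add_distrib]
  exact Finset.sum_le_sum fun k _ => (abs_sub _ _).trans (by simp [abs_of_nonneg, hω, hω'])

theorem le_sum_sum_sub_mul_sub_of_mem_zero_one [DecidableEq ι] (r : ι → ι → ℝ) {L q : ℝ}
    (hω : ∀ k, ω k = 0 ∨ ω k = 1) (hω' : ∀ k, ω' k = 0 ∨ ω' k = 1)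
    (hwω : ∑ k, ω k = L) (hwω' : ∑ k, ω' k = L)
    (hdist : L / 5 ≤ (Finset.univ.filter fun k => ω k ≠ ω' k).card)
    (hq : 0 ≤ q) (hqL : 4 * L * q ≤ 1) (hdiag : ∀ k, r k k = 1)
    (hoff : ∀ k k', k ≠ k' → |r k k'| ≤ q) :
    L / 10 ≤ ∑ k, ∑ k', (ω k - ω' k) * (ω k' - ω' k') * r k k' := by
  set s : ℝ := ((Finset.univ.filter fun k => ω k ≠ ω' k).card : ℝ)
  have hform := sum_sq_sub_mul_sq_sum_abs_le r (fun k => ω k - ω' k) hq hdiag hoff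
  rw [sum_sq_sub_eq_card_of_mem_zero_one hω hω',
    sum_abs_sub_eq_card_of_mem_zero_one hω hω'] at hform
  have hs2L : s ≤ 2 * L := by
    have h := sum_abs_sub_le_of_nonneg (ω := ω) (ω' := ω')
      (fun k => by rcases hω k with h | h <;> simp [h])
      (fun k => by rcases hω' k with h | h <;> simp [h])
    rw [sum_abs_sub_eq_card_of_mem_zero_one hω hω', hwω, hwω'] at h
    linarith
  have hs : 0 ≤ s := by positivity
  nlinarith [mul_le_mul_of_nonneg_left hs2L (mul_nonneg hs hq)]

end BinaryVectors

theorem sq_sub_sum_stdHermite {ι : Type*} [Fintype ι] (c : ℝ) (ω ω' z : ι → ℝ) (n : ℕ) :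
    (c * ∑ k, ω k * stdHermite n (z k) - c * ∑ k, ω' k * stdHermite n (z k)) ^ 2 =
      c ^ 2 / n ! * (∑ k, (ω k - ω' k) * (hermiteReal n).eval (z k)) ^ 2 := by
  have hdiff : ∑ k, ω k * stdHermite n (z k) - ∑ k, ω' k * stdHermite n (z k) =
      (∑ k, (ω k - ω' k) * (hermiteReal n).eval (z k)) / √(n ! : ℝ) := by
    rw [← Finset.sum_sub_distrib, Finset.sum_div]
    simp only [stdHermite, hermiteH_eq_eval_hermiteReal]
    exact Finset.sum_congr rfl fun k _ => by ring
  rw [← mul_sub, hdiff, mul_pow, div_pow (∑ k, _), Real.sq_sqrt (by positivity)]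
  ring

theorem hermite_packing_separation_general (d M L ℓ : ℕ) (hL : 0 < L)
    (v1 : ℝ) (θ : Fin M → Fin d → ℝ)
    (hunit : ∀ k, Real.sqrt (∑ j, θ k j ^ 2) = 1)
    (hip : ∀ i j : Fin M, i ≠ j → |∑ r, θ i r * θ j r| ≤ 9 / 10)
    (ω ω' : Fin M → ℝ) (hω : ∀ k, ω k = 0 ∨ ω k = 1) (hω' : ∀ k, ω' k = 0 ∨ ω' k = 1)
    (hwω : ∑ k, ω k = L) (hwω' : ∑ k, ω' k = L)
    (hdist : (L : ℝ) / 5 ≤ ((Finset.univ.filter fun k => ω k ≠ ω' k).card : ℝ))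
    (hℓ : (ℓ : ℝ) > Real.log (4 * L) / Real.log (10 / 9)) :
    v1 ^ 2 / (10 * L) ≤
      ∫ x, ((v1 / L) * ∑ k, ω k * stdHermite ℓ (∑ j, θ k j * x j) -
        (v1 / L) * ∑ k, ω' k * stdHermite ℓ (∑ j, θ k j * x j)) ^ 2 ∂stdGaussian d := by
  classical
  have hθ : ∀ k, θ k ⬝ᵥ θ k = 1 := fun k => by
    simpa [dotProduct, sq] using Real.sqrt_eq_one.1 (hunit k)
  have hq : 4 * L * (9 / 10 : ℝ) ^ ℓ ≤ 1 := by
    have h : (4 * L : ℝ) < (10 / 9) ^ ℓ := (Real.lt_pow_iff_log_lt (by positivity) (by norm_num)).2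
      ((div_lt_iff₀ (Real.log_pos (by norm_num))).1 hℓ)
    calc 4 * L * (9 / 10 : ℝ) ^ ℓ ≤ (10 / 9) ^ ℓ * (9 / 10) ^ ℓ := by gcongr
      _ = 1 := by rw [← mul_pow]; norm_num
  have hgram := le_sum_sum_sub_mul_sub_of_mem_zero_one (fun k k' => (θ k ⬝ᵥ θ k') ^ ℓ)
    hω hω' hwω hwω' hdist (by positivity) hq (fun k => by simp [hθ])
    fun k k' hkk' => by rw [abs_pow]; exact pow_le_pow_left₀ (abs_nonneg _) (hip k k' hkk') ℓ
  have hfac : (ℓ ! : ℝ) ≠ 0 := by positivity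
  calc v1 ^ 2 / (10 * L) = (v1 / L) ^ 2 * (L / 10) := by field_simp
    _ ≤ (v1 / L) ^ 2 * ∑ k, ∑ k', (ω k - ω' k) * (ω k' - ω' k') * (θ k ⬝ᵥ θ k') ^ ℓ := by
      gcongr
    _ = (v1 / L) ^ 2 / ℓ ! * ∫ x, (∑ k, (ω k - ω' k) * (hermiteReal ℓ).eval (θ k ⬝ᵥ x)) ^ 2
          ∂stdGaussian d := by
      rw [integral_sq_sum_hermiteReal_stdGaussian θ hθ]
      field_simp
    _ = _ := by
      rw [← integral_const_mul]
      exact integral_congr_ae (ae_of_all _ fun x =>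
        (sq_sub_sum_stdHermite (v1 / L) ω ω' (fun k => θ k ⬝ᵥ x) ℓ).symm)

/-- Separation of Hermite ridge packing functions: if the `θ_k` are unit vectors with
pairwise inner products at most `9/10` in magnitude, `ω, ω'` are binary strings of weight
`L` at Hamming distance at least `L/5`, and `ℓ > log(4L)/log(10/9)`, then
`E[(f_ω(X) − f_{ω'}(X))²] ≥ v1²/(10L)` for `X ~ N(0, I_d)`. -/
theorem hermite_packing_separation (d M L ℓ : ℕ) (hd : 0 < d) (hM : 0 < M) (hL : 0 < L)
    (hℓ0 : 0 < ℓ) (v1 : ℝ) (hv1 : 0 < v1) (θ : Fin M → Fin d → ℝ)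
    (hunit : ∀ k, Real.sqrt (∑ j, θ k j ^ 2) = 1)
    (hip : ∀ i j : Fin M, i ≠ j → |∑ r, θ i r * θ j r| ≤ 9 / 10)
    (ω ω' : Fin M → ℝ) (hω : ∀ k, ω k = 0 ∨ ω k = 1) (hω' : ∀ k, ω' k = 0 ∨ ω' k = 1)
    (hwω : ∑ k, ω k = L) (hwω' : ∑ k, ω' k = L)
    (hdist : (L : ℝ) / 5 ≤ ((Finset.univ.filter fun k => ω k ≠ ω' k).card : ℝ))
    (hℓ : (ℓ : ℝ) > Real.log (4 * L) / Real.log (10 / 9)) :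
    v1 ^ 2 / (10 * L) ≤
      ∫ x, ((v1 / L) * ∑ k, ω k * stdHermite ℓ (∑ j, θ k j * x j) -
        (v1 / L) * ∑ k, ω' k * stdHermite ℓ (∑ j, θ k j * x j)) ^ 2 ∂stdGaussian d :=
  hermite_packing_separation_general d M L ℓ hL v1 θ hunit hip ω ω' hω hω' hwω hwω' hdist hℓ

end
end

section
/- Let d and v0 be positive integers with v0² ≤ d/10 and d ≥ 10, and let v1 > 0. Then there exists a set B of at least M := √(binomial(d, v0²)) vectors in ℝ^d such that each θ ∈ B has ‖θ‖₂ = 1 and ‖θ‖₁ = v0, and |θ·θ'| ≤ 9/10 for all distinct θ, θ' ∈ B. (Each θ has the form a/v0 for some a ∈ {0,1}^d of Hamming weight v0².) -/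
/-!
Take `k = v0²` and a maximal family `F` of `k`-subsets of `Fin d` any two of which meet in fewer
than `k - s` points, `s = ⌊(k - 1)/10⌋`. By maximality the sets at Johnson distance at most `s`
from members of `F` cover all `C(d, k)` of the `k`-subsets, and each such ball has at most
`(∑_{j ≤ s} C(k, j)) (∑_{j ≤ s} C(d - k, j)) ≤ (e k / s)^s (e d / s)^s` elements. Since `d ≥ 10 k`
and `k ≥ 10 s`, the square of this bound is at most `(d / k)^k ≤ C(d, k)`, so `#F ≥ √C(d, k)`.
The vectors `1_A / v0`, `A ∈ F`, are unit vectors with `ℓ₁` norm `v0` and inner products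
`#(A ∩ B) / v0² ≤ 9/10`.
-/

open Finset Real

namespace Nat

theorem pow_div_le_choose {n k : ℕ} (hkn : k ≤ n) : ((n : ℝ) / k) ^ k ≤ n.choose k := by
  rcases k.eq_zero_or_pos with rfl | hk
  · simp
  have hprod : n ^ k * k ! ≤ n.descFactorial k * k ^ k := by
    rw [← k.descFactorial_self, descFactorial_eq_prod_range, descFactorial_eq_prod_range]
    calc n ^ k * ∏ i ∈ range k, (k - i) = ∏ i ∈ range k, n * (k - i) := by
          rw [prod_mul_distrib, prod_const, card_range]
      _ ≤ ∏ i ∈ range k, (n - i) * k := prod_le_prod' fun i hi => by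
          have hik : i < k := mem_range.mp hi
          zify [hik.le, hik.le.trans hkn]
          nlinarith
      _ = (∏ i ∈ range k, (n - i)) * k ^ k := by
          rw [prod_mul_distrib, prod_const, card_range]
  rw [descFactorial_eq_factorial_mul_choose, mul_comm (k !), mul_assoc, mul_comm (k !),
    ← mul_assoc] at hprod
  have hnat : n ^ k ≤ n.choose k * k ^ k := Nat.le_of_mul_le_mul_right hprod k.factorial_pos
  rw [div_pow, div_le_iff₀ (by positivity)]
  exact_mod_cast hnat

theorem sum_range_choose_le_exp_mul_div_pow {n s : ℕ} (hsn : s ≤ n) :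
    ∑ j ∈ range (s + 1), (n.choose j : ℝ) ≤ (exp 1 * n / s) ^ s := by
  rcases s.eq_zero_or_pos with rfl | hs
  · simp
  have hns : 1 ≤ (n : ℝ) / s := by
    rw [one_le_div (by positivity)]
    exact_mod_cast hsn
  have hterm : ∀ j ∈ range (s + 1), (n.choose j : ℝ) ≤ ((n : ℝ) / s) ^ s * ((s : ℝ) ^ j / j !) :=
    fun j hj => calc (n.choose j : ℝ)
        ≤ (n : ℝ) ^ j / j ! := choose_le_pow_div j n
      _ = ((n : ℝ) / s) ^ j * ((s : ℝ) ^ j / j !) := by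
          rw [div_pow]; field_simp
      _ ≤ ((n : ℝ) / s) ^ s * ((s : ℝ) ^ j / j !) := by
          gcongr
          exact Nat.lt_succ_iff.mp (mem_range.mp hj)
  calc ∑ j ∈ range (s + 1), (n.choose j : ℝ)
      ≤ ((n : ℝ) / s) ^ s * ∑ j ∈ range (s + 1), (s : ℝ) ^ j / j ! := by
        rw [mul_sum]; exact sum_le_sum hterm
    _ ≤ ((n : ℝ) / s) ^ s * exp s := by gcongr; exact sum_le_exp_of_nonneg (by positivity) _
    _ = (exp 1 * n / s) ^ s := by
        rw [← exp_one_pow, mul_div_assoc, mul_pow, mul_comm]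

theorem sq_sum_choose_mul_sum_choose_le_choose {n k : ℕ} (hk : 1 ≤ k) (hkn : 10 * k ≤ n) :
    ((∑ j ∈ range ((k - 1) / 10 + 1), k.choose j) *
      ∑ j ∈ range ((k - 1) / 10 + 1), (n - k).choose j) ^ 2 ≤ n.choose k := by
  set s := (k - 1) / 10
  rcases s.eq_zero_or_pos with hs | hs
  · simp only [hs, zero_add, range_one, sum_singleton, choose_zero_right]
    exact choose_pos (by omega)
  set x : ℝ := n / k
  have hkR : (0 : ℝ) < k := by exact_mod_cast hk
  have hx : 10 ≤ x := by
    rw [le_div_iff₀ hkR]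
    exact_mod_cast hkn
  have hks : (k : ℝ) / s ≤ 20 := by
    rw [div_le_iff₀ (by exact_mod_cast hs)]
    exact_mod_cast (by omega : k ≤ 20 * s)
  have he : exp 1 ≤ 3 := exp_one_lt_d9.le.trans (by norm_num)
  have hU := sum_range_choose_le_exp_mul_div_pow (n := k) (s := s) (by omega)
  have hV : ∑ j ∈ range (s + 1), ((n - k).choose j : ℝ) ≤ (exp 1 * n / s) ^ s := by
    refine (sum_range_choose_le_exp_mul_div_pow (by omega)).trans ?_
    gcongr
    exact_mod_cast n.sub_le k
  have hprod : (exp 1 * k / s) * (exp 1 * n / s) ≤ 400 * exp 1 ^ 2 * x := by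
    have : (exp 1 * k / s) * (exp 1 * n / s) = exp 1 ^ 2 * x * ((k : ℝ) / s) ^ 2 := by
      simp only [x]; field_simp
    rw [this]
    have hks2 : ((k : ℝ) / s) ^ 2 ≤ 20 ^ 2 := by gcongr
    have hx0 : 0 ≤ x := by linarith
    calc exp 1 ^ 2 * x * ((k : ℝ) / s) ^ 2 ≤ exp 1 ^ 2 * x * 20 ^ 2 := by gcongr
      _ = 400 * exp 1 ^ 2 * x := by ring
  have hconst : (400 * exp 1 ^ 2) ^ 2 ≤ x ^ 8 := calc
    (400 * exp 1 ^ 2) ^ 2 ≤ (400 * 3 ^ 2) ^ 2 := by gcongr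
    _ ≤ 10 ^ 8 := by norm_num
    _ ≤ x ^ 8 := by gcongr
  have hchoose : x ^ (10 * s) ≤ n.choose k := calc
    x ^ (10 * s) ≤ x ^ k := pow_le_pow_right₀ (by linarith) (by omega)
    _ ≤ n.choose k := pow_div_le_choose (by omega)
  rw [← Nat.cast_le (α := ℝ)]
  push_cast
  calc ((∑ j ∈ range (s + 1), (k.choose j : ℝ)) * ∑ j ∈ range (s + 1), ((n - k).choose j : ℝ)) ^ 2
      ≤ ((exp 1 * k / s) ^ s * (exp 1 * n / s) ^ s) ^ 2 := by gcongr
    _ ≤ ((400 * exp 1 ^ 2 * x) ^ s) ^ 2 := by rw [← mul_pow]; gcongr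
    _ = ((400 * exp 1 ^ 2) ^ 2 * x ^ 2) ^ s := by
        rw [← pow_mul, ← mul_pow, ← pow_mul, mul_comm s]
    _ ≤ (x ^ 8 * x ^ 2) ^ s := by gcongr
    _ = x ^ (10 * s) := by ring
    _ ≤ n.choose k := hchoose

end Nat

theorem Real.sqrt_le_of_le_mul_of_sq_le {N F m : ℝ} (hF : 0 ≤ F) (hm : m ^ 2 ≤ N)
    (hN : N ≤ F * m) : √N ≤ F := by
  have hmN : m ≤ √N := (le_abs_self m).trans (abs_le_sqrt hm)
  by_contra! h
  nlinarith [mul_le_mul_of_nonneg_left hmN hF, sq_sqrt ((sq_nonneg m).trans hm),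
    mul_lt_mul_of_pos_right h (hF.trans_lt h)]

namespace Finset

section Packing

variable {α : Type*} (r : α → α → Prop) [Std.Symm r]

theorem exists_maximal_pairwise_not_rel (S : Finset α) :
    ∃ F ⊆ S, (F : Set α).Pairwise (fun a b => ¬ r a b) ∧
      ∀ b ∈ S, b ∉ F → ∃ a ∈ F, r a b := by
  classical
  set G := S.powerset.filter fun F : Finset α => (F : Set α).Pairwise (fun a b => ¬ r a b)
  obtain ⟨F, hF, hmax⟩ := exists_max_image G card ⟨∅, by simp [G]⟩
  rw [mem_filter, mem_powerset] at hF
  refine ⟨F, hF.1, hF.2, fun b hbS hbF => ?_⟩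
  by_contra! hfar
  have hins : insert b F ∈ G := by
    rw [mem_filter, mem_powerset, coe_insert, Set.pairwise_insert]
    exact ⟨insert_subset hbS hF.1, hF.2, fun a ha _ =>
      ⟨fun h => hfar a ha (Std.Symm.symm _ _ h), hfar a ha⟩⟩
  have := hmax _ hins
  rw [card_insert_of_notMem hbF] at this
  omega

theorem exists_pairwise_not_rel_card_le_mul [DecidableRel r]
    {S : Finset α} (hrefl : ∀ a ∈ S, r a a) {m : ℕ} (hball : ∀ a ∈ S, #{b ∈ S | r a b} ≤ m) :
    ∃ F ⊆ S, (F : Set α).Pairwise (fun a b => ¬ r a b) ∧ #S ≤ #F * m := by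
  classical
  obtain ⟨F, hFS, hF, hcover⟩ := exists_maximal_pairwise_not_rel r S
  refine ⟨F, hFS, hF, ?_⟩
  calc #S ≤ #(F.biUnion fun a => {b ∈ S | r a b}) := card_le_card fun b hb => by
        rw [mem_biUnion]
        by_cases hbF : b ∈ F
        · exact ⟨b, hbF, mem_filter.mpr ⟨hb, hrefl b hb⟩⟩
        · obtain ⟨a, haF, hab⟩ := hcover b hb hbF
          exact ⟨a, haF, mem_filter.mpr ⟨hb, hab⟩⟩
    _ ≤ ∑ a ∈ F, #{b ∈ S | r a b} := card_biUnion_le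
    _ ≤ #F * m := by
        simpa using sum_le_card_nsmul F _ m fun a ha => hball a (hFS ha)

end Packing

variable {ι : Type*} [DecidableEq ι]

theorem card_biUnion_range_powersetCard_le (A : Finset ι) (s : ℕ) :
    #((range (s + 1)).biUnion fun j => powersetCard j A) ≤ ∑ j ∈ range (s + 1), (#A).choose j :=
  card_biUnion_le.trans_eq (sum_congr rfl fun j _ => card_powersetCard j A)

/-- A `k`-set `T` at Johnson distance at most `s` from the `k`-set `A` is determined by the pair
`(A \ T, T \ A)` of sets of equal size at most `s`. -/
theorem card_filter_le_card_inter_add_le [Fintype ι] {A : Finset ι} {k : ℕ} (hA : #A = k)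
    (s : ℕ) : #{T ∈ powersetCard k univ | k ≤ #(A ∩ T) + s} ≤
      (∑ j ∈ range (s + 1), k.choose j) * ∑ j ∈ range (s + 1), (Fintype.card ι - k).choose j := by
  set U : Finset (Finset ι) := (range (s + 1)).biUnion fun j => powersetCard j A
  set V : Finset (Finset ι) := (range (s + 1)).biUnion fun j => powersetCard j Aᶜ
  have hmaps : ∀ T ∈ {T ∈ powersetCard k (univ : Finset ι) | k ≤ #(A ∩ T) + s},
      (A \ T, T \ A) ∈ U ×ˢ V := by
    intro T hT
    rw [mem_filter, mem_powersetCard] at hT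
    have h₁ := card_inter_add_card_sdiff A T
    have h₂ := card_inter_add_card_sdiff T A
    rw [inter_comm] at h₂
    simp only [U, V, mem_product, mem_biUnion, mem_range, mem_powersetCard]
    exact ⟨⟨_, by omega, sdiff_subset, rfl⟩,
      ⟨_, by omega, fun x hx => mem_compl.mpr (mem_sdiff.mp hx).2, rfl⟩⟩
  have hinj : Function.Injective fun T : Finset ι => (A \ T, T \ A) := by
    intro T T' h
    simp only [Prod.mk.injEq] at h
    rw [← sdiff_union_inter T A, ← sdiff_union_inter T' A, inter_comm, inter_comm T',
      ← sdiff_sdiff_self_left, ← sdiff_sdiff_self_left, h.1, h.2]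
  calc _ ≤ #(U ×ˢ V) := card_le_card_of_injOn _ hmaps hinj.injOn
    _ ≤ _ := by
      rw [card_product]
      have hU := card_biUnion_range_powersetCard_le A s
      have hV := card_biUnion_range_powersetCard_le Aᶜ s
      rw [hA] at hU
      rw [card_compl, hA] at hV
      exact Nat.mul_le_mul hU hV

theorem exists_large_family_card_inter_le [Fintype ι] {k : ℕ} (hk : 1 ≤ k)
    (hkn : 10 * k ≤ Fintype.card ι) :
    ∃ F : Finset (Finset ι), (∀ A ∈ F, #A = k) ∧
      (F : Set (Finset ι)).Pairwise (fun A B => 10 * #(A ∩ B) ≤ 9 * k) ∧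
      √((Fintype.card ι).choose k) ≤ #F := by
  set s := (k - 1) / 10 with hs
  set r := fun A T : Finset ι => k ≤ #(A ∩ T) + s
  have : Std.Symm r := ⟨fun A T h => by simpa only [r, inter_comm] using h⟩
  obtain ⟨F, hFS, hFfar, hcount⟩ := exists_pairwise_not_rel_card_le_mul r
    (fun A hA => by simp_all [r, mem_powersetCard])
    (fun A hA => card_filter_le_card_inter_add_le (mem_powersetCard.mp hA).2 s)
  rw [card_powersetCard, card_univ] at hcount
  set m := (∑ j ∈ range (s + 1), k.choose j) * ∑ j ∈ range (s + 1), (Fintype.card ι - k).choose j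
  refine ⟨F, fun A hA => (mem_powersetCard.mp (hFS hA)).2,
    hFfar.imp fun A B hAB => by simp only [r] at hAB; omega, ?_⟩
  exact Real.sqrt_le_of_le_mul_of_sq_le (m := m) (Nat.cast_nonneg _)
    (by exact_mod_cast Nat.sq_sum_choose_mul_sum_choose_le_choose hk hkn)
    (by exact_mod_cast hcount)

theorem sum_boole_div_mul_boole_div [Fintype ι] (c : ℝ) (A B : Finset ι) :
    ∑ j, (if j ∈ A then 1 else 0) / c * ((if j ∈ B then 1 else 0) / c) = #(A ∩ B) / c ^ 2 := by
  simp_rw [div_mul_div_comm, ← sum_div, ite_zero_mul_ite_zero, mul_one, ← mem_inter, sum_boole,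
    filter_mem_eq_inter, univ_inter, sq]

theorem sum_abs_boole_div [Fintype ι] {c : ℝ} (hc : 0 ≤ c) (A : Finset ι) :
    ∑ j, |(if j ∈ A then 1 else 0) / c| = #A / c := by
  simp_rw [abs_div, abs_of_nonneg hc, ← sum_div, apply_ite abs, abs_one, abs_zero, sum_boole,
    filter_mem_eq_inter, univ_inter]

theorem boole_div_injective {c : ℝ} (hc : c ≠ 0) :
    Function.Injective fun (A : Finset ι) (j : ι) => (if j ∈ A then (1 : ℝ) else 0) / c := by
  intro A B h
  ext j
  have := congrFun h j
  by_cases hA : j ∈ A <;> by_cases hB : j ∈ B <;> simp_all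

end Finset

theorem near_orthogonal_family_general (d v0 : ℕ) (hv0 : 0 < v0)
    (hsq : (v0 : ℝ) ^ 2 ≤ (d : ℝ) / 10) :
    ∃ B : Finset (Fin d → ℝ),
      Real.sqrt (Nat.choose d (v0 ^ 2)) ≤ (B.card : ℝ) ∧
      (∀ θ ∈ B, Real.sqrt (∑ j, θ j ^ 2) = 1) ∧
      (∀ θ ∈ B, ∑ j, |θ j| = (v0 : ℝ)) ∧
      (∀ θ ∈ B, ∀ θ' ∈ B, θ ≠ θ' → |∑ j, θ j * θ' j| ≤ 9 / 10) ∧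
      (∀ θ ∈ B, ∃ a : Fin d → ℝ, (∀ j, a j = 0 ∨ a j = 1) ∧
        (∑ j, a j = (v0 : ℝ) ^ 2) ∧ θ = fun j => a j / v0) := by
  set k := v0 ^ 2
  have hv0R : (0 : ℝ) < v0 := by exact_mod_cast hv0
  have hkd : 10 * k ≤ Fintype.card (Fin d) := by
    rw [Fintype.card_fin]
    exact_mod_cast (by push_cast [k]; linarith : ((10 * k : ℕ) : ℝ) ≤ d)
  obtain ⟨F, hFk, hFfar, hcard⟩ := exists_large_family_card_inter_le (Nat.one_le_pow _ _ hv0) hkd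
  have hcardF : ∀ A ∈ F, (#A : ℝ) = v0 ^ 2 := fun A hA => by rw [hFk A hA]; push_cast [k]; rfl
  refine ⟨F.image fun A j => (if j ∈ A then 1 else 0) / v0, ?_,
    forall_mem_image.2 fun A hA => ?_, forall_mem_image.2 fun A hA => ?_,
    forall_mem_image.2 fun A hA => forall_mem_image.2 fun B hB hAB => ?_,
    forall_mem_image.2 fun A hA => ⟨fun j => if j ∈ A then 1 else 0, fun j => ?_, ?_, rfl⟩⟩
  · rw [Fintype.card_fin] at hcard
    rwa [card_image_of_injective _ (boole_div_injective hv0R.ne')]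
  · simp_rw [pow_two, sum_boole_div_mul_boole_div, inter_self, hcardF A hA,
      div_self (pow_ne_zero 2 hv0R.ne'), sqrt_one]
  · rw [sum_abs_boole_div hv0R.le, hcardF A hA, pow_two, mul_div_cancel_right₀ _ hv0R.ne']
  · have hfar : (10 * #(A ∩ B) : ℝ) ≤ 9 * v0 ^ 2 := by
      exact_mod_cast hFfar hA hB fun h => hAB (h ▸ rfl)
    rw [sum_boole_div_mul_boole_div, abs_of_nonneg (by positivity), div_le_iff₀ (by positivity)]
    linarith
  · by_cases hj : j ∈ A <;> simp [hj]
  · rw [sum_boole, filter_mem_eq_inter, univ_inter, hcardF A hA]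

/-- A large family of unit vectors of the form `a/v0`, `a ∈ {0,1}^d` of Hamming weight
`v0²`, with `ℓ₁` norm `v0` and pairwise inner products of magnitude at most `9/10`. -/
theorem near_orthogonal_family (d v0 : ℕ) (hd : 10 ≤ d) (hv0 : 0 < v0)
    (hsq : (v0 : ℝ) ^ 2 ≤ (d : ℝ) / 10) (v1 : ℝ) (hv1 : 0 < v1) :
    ∃ B : Finset (Fin d → ℝ),
      Real.sqrt (Nat.choose d (v0 ^ 2)) ≤ (B.card : ℝ) ∧
      (∀ θ ∈ B, Real.sqrt (∑ j, θ j ^ 2) = 1) ∧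
      (∀ θ ∈ B, ∑ j, |θ j| = (v0 : ℝ)) ∧
      (∀ θ ∈ B, ∀ θ' ∈ B, θ ≠ θ' → |∑ j, θ j * θ' j| ≤ 9 / 10) ∧
      (∀ θ ∈ B, ∃ a : Fin d → ℝ, (∀ j, a j = 0 ∨ a j = 1) ∧
        (∑ j, a j = (v0 : ℝ) ^ 2) ∧ θ = fun j => a j / v0) :=
  near_orthogonal_family_general d v0 hv0 hsq
end

section
/- Let v0 be a positive integer and v1 > 0, and let d be a positive integer. Then F_{v0, v1, φ} ⊆ F_{1, √2·π·v0·v1, sgn}, where φ(z) = √2 sin(πz) and sgn(z) = 1 if z > 0 and −1 otherwise. That is, every function on [-1,1]^d in the closed ℓ₁-hull of sinusoidal ridge functions with inner ℓ₁ norm at most v0 and outer ℓ₁ norm at most v1 lies in the closed ℓ₁-hull of signum ridge functions with inner ℓ₁ norm at most 1 and outer ℓ₁ norm at most √2·π·v0·v1. -/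
open MeasureTheory ProbabilityTheory Real ENNReal

noncomputable section

/-- The cube `B = [-1,1]^d`. -/
def cube (d : ℕ) : Set (Fin d → ℝ) := Set.univ.pi fun _ => Set.Icc (-1 : ℝ) 1

/-- `F_{v0,v1,φ}`: the closure in sup norm on the cube `[-1,1]^d` of the set of finite
ridge combinations `x ↦ ∑ₖ cₖ φ(θₖ·x − bₖ)` with `‖θₖ‖₁ ≤ v0` and `∑ₖ |cₖ| ≤ v1`. -/
def RidgeClass (d : ℕ) (φ : ℝ → ℝ) (v0 v1 : ℝ) : Set ((Fin d → ℝ) → ℝ) :=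
  {f | ∀ ε > 0, ∃ (m : ℕ) (c : Fin m → ℝ) (θ : Fin m → Fin d → ℝ) (b : Fin m → ℝ),
    (∀ k, ∑ j, |θ k j| ≤ v0) ∧ (∑ k, |c k| ≤ v1) ∧
    ∀ x ∈ cube d, |f x - ∑ k, c k * φ ((∑ j, θ k j * x j) - b k)| ≤ ε}

/-
On the cube, every inner product `θ·x` with `‖θ‖₁ ≤ v0` lies in `[-v0, v0]`, so it
suffices to approximate one ridge profile `u ↦ √2 sin(π(u - b))` on `[-v0, v0]` by sums
`∑ wᵢ sgn(u - Tᵢ)`. For a function vanishing at both ends of an interval, sampling it on a fine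
grid and placing a jump of half the increment at each midpoint reproduces it at the nearest grid
point, with `∑ |wᵢ|` at most half its total variation. Enlarging `[-v0, v0]` to an interval
`[n, n + 2 v0 + 1]`, `n ∈ ℤ + b`, on which the sine vanishes at both ends, the variation is
`2 √2 (2 v0 + 1)`, so the coefficients cost `√2 (2 v0 + 1) ≤ √2 π v0`. Finally `sgn` is invariant
under positive rescaling, so the inner weights can be normalised to `‖θ‖₁ ≤ 1`.
-/

open Set

theorem sgn_mul_of_pos {c : ℝ} (hc : 0 < c) (z : ℝ) : sgn (c * z) = sgn z := by
  simp only [sgn, mul_pos_iff_of_pos_left hc]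

theorem eVariationOn_sin_Icc_le {m : ℤ} {a b : ℝ} (ha : m * π - π / 2 ≤ a) (hab : a ≤ b)
    (hb : b ≤ m * π + π / 2) :
    eVariationOn sin (Icc a b) ≤ ENNReal.ofReal |sin b - sin a| := by
  set W := Icc (m * π - π / 2) (m * π + π / 2)
  set σ : ℝ := (-1) ^ m
  have hσ : σ * σ = 1 := by rw [← mul_zpow]; norm_num
  have hmono : MonotoneOn (fun x => σ * sin x) W := by
    intro x hx y hy hxy
    simp only [σ, ← sin_sub_int_mul_pi]
    exact monotoneOn_sin ⟨by linarith [hx.1], by linarith [hx.2]⟩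
      ⟨by linarith [hy.1], by linarith [hy.2]⟩ (by linarith)
  have hlip : LipschitzWith 1 (fun y : ℝ => σ * y) := LipschitzWith.of_dist_le_mul fun x y => by
    simp [σ, Real.dist_eq, ← mul_sub, abs_mul]
  calc eVariationOn sin (Icc a b)
      = eVariationOn ((fun y => σ * y) ∘ fun x => σ * sin x) (W ∩ Icc a b) := by
        rw [inter_eq_right.2 (Icc_subset_Icc ha hb)]
        congr 1
        ext x
        simp [← mul_assoc, hσ]
    _ ≤ 1 * eVariationOn (fun x => σ * sin x) (W ∩ Icc a b) :=
        (hlip.lipschitzOnWith (s := univ)).comp_eVariationOn_le (mapsTo_univ _ _)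
    _ = ENNReal.ofReal (σ * sin b - σ * sin a) := by
        rw [one_mul, hmono.eVariationOn_eq ⟨by linarith, by linarith⟩ ⟨by linarith, hb⟩]
    _ ≤ ENNReal.ofReal |sin b - sin a| := by
        refine ENNReal.ofReal_le_ofReal ((le_abs_self _).trans_eq ?_)
        rw [← mul_sub, abs_mul, abs_neg_one_zpow, one_mul]

theorem eVariationOn_sin_Icc_int_mul_pi_le_two (m : ℤ) :
    eVariationOn sin (Icc (m * π) ((m + 1) * π)) ≤ 2 := by
  have hπ := pi_pos
  have hleft := eVariationOn_sin_Icc_le (m := m) (a := m * π) (b := m * π + π / 2)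
    (by linarith) (by linarith) le_rfl
  have hright := eVariationOn_sin_Icc_le (m := m + 1) (a := m * π + π / 2) (b := (m + 1) * π)
    (by push_cast; linarith) (by linarith) (by push_cast; linarith)
  have hsin : sin ((m + 1) * π) = 0 := by exact_mod_cast sin_int_mul_pi (m + 1)
  rw [sin_add_pi_div_two, sin_int_mul_pi, cos_int_mul_pi, sub_zero, abs_neg_one_zpow] at hleft
  rw [sin_add_pi_div_two, hsin, cos_int_mul_pi, zero_sub, abs_neg, abs_neg_one_zpow] at hright
  have hsplit := eVariationOn.Icc_add_Icc sin (s := univ) (a := m * π) (b := m * π + π / 2)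
    (c := (m + 1) * π) (by linarith) (by linarith) (mem_univ _)
  simp only [univ_inter] at hsplit
  rw [← hsplit]
  calc _ ≤ ENNReal.ofReal 1 + ENNReal.ofReal 1 := add_le_add hleft hright
    _ = 2 := by norm_num [one_add_one_eq_two]

theorem eVariationOn_sin_Icc_le_two_mul (n : ℤ) (P : ℕ) :
    eVariationOn sin (Icc (n * π) ((n + P) * π)) ≤ 2 * P := by
  have hI : Monotone fun j : ℕ => ((n + j : ℤ) : ℝ) * π := fun i j hij => by
    have : (i : ℝ) ≤ j := by exact_mod_cast hij
    push_cast
    nlinarith [pi_pos]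
  have hsum := eVariationOn.sum' sin hI (n := P)
  push_cast at hsum
  rw [add_zero] at hsum
  rw [← hsum]
  calc _ ≤ ∑ j ∈ Finset.range P, (2 : ℝ≥0∞) := Finset.sum_le_sum fun j _ => by
        simpa [add_assoc] using eVariationOn_sin_Icc_int_mul_pi_le_two (n + j)
    _ = 2 * P := by simp [mul_comm]

theorem sum_dist_le_toReal_eVariationOn {α E : Type*} [LinearOrder α] [PseudoMetricSpace E]
    {g : α → E} {s : Set α} (hg : BoundedVariationOn g s) {u : ℕ → α} {K : ℕ}
    (hu : MonotoneOn u (Icc 0 K)) (hus : ∀ i ∈ Icc 0 K, u i ∈ s) :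
    ∑ i ∈ Finset.range K, dist (g (u (i + 1))) (g (u i)) ≤ (eVariationOn g s).toReal := by
  rw [← ENNReal.ofReal_le_iff_le_toReal hg, ENNReal.ofReal_sum_of_nonneg fun _ _ => dist_nonneg]
  simpa only [Finset.range_eq_Ico, edist_dist] using
    eVariationOn.sum_le_of_monotoneOn_Icc (f := g) hu hus

theorem sum_range_half_sub_mul_sign (G : ℕ → ℝ) {k K : ℕ} (hkK : k ≤ K) :
    ∑ i ∈ Finset.range K, (G (i + 1) - G i) / 2 * (if i < k then 1 else -1) =
      G k - (G 0 + G K) / 2 := by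
  rw [← Finset.sum_range_add_sum_Ico _ hkK]
  have hlow : ∀ i ∈ Finset.range k,
      (G (i + 1) - G i) / 2 * (if i < k then 1 else -1) = (G (i + 1) - G i) / 2 := by
    intro i hi
    rw [if_pos (Finset.mem_range.1 hi), mul_one]
  have hhigh : ∀ i ∈ Finset.Ico k K,
      (G (i + 1) - G i) / 2 * (if i < k then 1 else -1) = -((G (i + 1) - G i) / 2) := by
    intro i hi
    rw [if_neg (Finset.mem_Ico.1 hi).1.not_gt, mul_neg_one]
  rw [Finset.sum_congr rfl hlow, Finset.sum_congr rfl hhigh, Finset.sum_neg_distrib,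
    ← Finset.sum_div, ← Finset.sum_div, Finset.sum_range_sub, Finset.sum_Ico_sub G hkK]
  ring

theorem exists_nearest_gridpoint {a h u : ℝ} (hh : 0 < h) {K : ℕ}
    (hu : u ∈ Icc a (a + K * h)) :
    ∃ k ≤ K, |u - (a + k * h)| ≤ h / 2 ∧ ∀ i : ℕ, a + (i + 1 / 2) * h < u ↔ i < k := by
  obtain ⟨x, rfl⟩ : ∃ x : ℝ, u = a + (x + 1 / 2) * h := ⟨(u - a) / h - 1 / 2, by field_simp; ring⟩
  have hx₀ : -(1 / 2) ≤ x := by nlinarith [hu.1]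
  have hxK : x ≤ K := by nlinarith [hu.2]
  have hx_le : x ≤ ⌈x⌉₊ := Nat.le_ceil x
  have hle_x : (⌈x⌉₊ : ℝ) ≤ x + 1 := by
    rcases le_or_gt 0 x with hx | hx
    · exact (Nat.ceil_lt_add_one hx).le
    · rw [Nat.ceil_eq_zero.2 hx.le]; push_cast; linarith
  refine ⟨⌈x⌉₊, Nat.ceil_le.2 hxK, abs_le.2 ⟨by nlinarith, by nlinarith⟩, fun i => ?_⟩
  rw [Nat.lt_ceil]
  constructor <;> intro h' <;> nlinarith

theorem exists_sgn_sum_approx_of_lipschitzOnWith {g : ℝ → ℝ} {C : NNReal} {a b : ℝ}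
    (hab : a < b) (hg : LipschitzOnWith C g (Icc a b)) (ha : g a = 0) (hb : g b = 0) {δ : ℝ}
    (hδ : 0 < δ) :
    ∃ (K : ℕ) (w T : Fin K → ℝ), ∑ i, |w i| ≤ (eVariationOn g (Icc a b)).toReal / 2 ∧
      ∀ u ∈ Icc a b, |g u - ∑ i, w i * sgn (u - T i)| ≤ δ := by
  obtain ⟨K, hK⟩ := exists_nat_gt (C * (b - a) / (2 * δ))
  have hKpos : (0 : ℝ) < K := lt_of_le_of_lt (by positivity) hK
  set h := (b - a) / K
  have hh : 0 < h := div_pos (sub_pos.2 hab) hKpos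
  have hb_eq : b = a + K * h := by simp only [h]; field_simp; ring
  have hCh : C * h / 2 ≤ δ := by
    rw [div_lt_iff₀ (by positivity)] at hK
    have : C * h ≤ 2 * δ := by
      simp only [h, ← mul_div_assoc]
      rw [div_le_iff₀ hKpos]
      linarith
    linarith
  set t : ℕ → ℝ := fun i => a + i * h
  set w : ℕ → ℝ := fun i => (g (t (i + 1)) - g (t i)) / 2
  set T : ℕ → ℝ := fun i => a + (i + 1 / 2) * h
  have ht_mem : ∀ i ≤ K, t i ∈ Icc a b := fun i hi => by
    have : (i : ℝ) ≤ K := by exact_mod_cast hi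
    exact ⟨by simp only [t]; linarith [mul_nonneg i.cast_nonneg hh.le],
      by rw [hb_eq]; simp only [t]; gcongr⟩
  refine ⟨K, fun i => w i, fun i => T i, ?_, fun u hu => ?_⟩
  · have hvar := sum_dist_le_toReal_eVariationOn
      (hg.comp_boundedVariationOn (mapsTo_id _) (BoundedVariationOn.id_Icc a b)) (K := K) (u := t)
      (fun i _ j _ hij => by simp only [t]; gcongr) (fun i hi => ht_mem i hi.2)
    rw [Fin.sum_univ_eq_sum_range (fun i => |w i|)]
    simp only [Function.comp_id, Real.dist_eq] at hvar
    simp only [w, abs_div, abs_two, ← Finset.sum_div]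
    gcongr
  · obtain ⟨k, hkK, hdist, hk⟩ := exists_nearest_gridpoint hh (hb_eq ▸ hu)
    have hsum : ∑ i : Fin K, w i * sgn (u - T i) = g (t k) := by
      rw [Fin.sum_univ_eq_sum_range (fun i => w i * sgn (u - T i))]
      simp only [w, T, sgn, sub_pos, hk]
      rw [sum_range_half_sub_mul_sign (fun i => g (t i)) hkK]
      simp [t, ha, ← hb_eq, hb]
    rw [hsum, ← Real.dist_eq]
    calc dist (g u) (g (t k)) ≤ C * dist u (t k) := hg.dist_le_mul u hu (t k) (ht_mem k hkK)
      _ ≤ C * (h / 2) := by rw [Real.dist_eq]; gcongr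
      _ ≤ δ := by linarith

theorem exists_sgn_sum_approx_sqrt_two_sin {v0 : ℕ} (hv0 : 0 < v0) (b : ℝ) {δ : ℝ}
    (hδ : 0 < δ) :
    ∃ (K : ℕ) (w T : Fin K → ℝ), ∑ i, |w i| ≤ √2 * π * v0 ∧
      ∀ u : ℝ, |u| ≤ v0 → |√2 * sin (π * (u - b)) - ∑ i, w i * sgn (u - T i)| ≤ δ := by
  have hπ := pi_pos
  set n : ℤ := -⌊b⌋ - v0 - 1
  set P : ℕ := 2 * v0 + 1
  have hsin_right : sin ((n + P) * π) = 0 := by exact_mod_cast sin_int_mul_pi (n + P)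
  have hnP : n * π < (n + P) * π := by
    have : (0 : ℝ) < P := by positivity
    nlinarith
  obtain ⟨K, w, T, hw, happrox⟩ := exists_sgn_sum_approx_of_lipschitzOnWith
    (a := n * π) (b := (n + P) * π) hnP
    lipschitzWith_sin.lipschitzOnWith (sin_int_mul_pi n) hsin_right
    (δ := δ / √2) (by positivity)
  have hvar : (eVariationOn sin (Icc (n * π) ((n + P) * π))).toReal ≤ 2 * P :=
    ENNReal.toReal_le_of_le_ofReal (by positivity)
      ((eVariationOn_sin_Icc_le_two_mul n P).trans_eq (by simp [ENNReal.ofReal_mul]))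
  have hPv0 : (P : ℝ) ≤ π * v0 := by
    have : (1 : ℝ) ≤ v0 := by exact_mod_cast hv0
    simp only [P]; push_cast; nlinarith [pi_gt_three]
  refine ⟨K, fun i => √2 * w i, fun i => b + T i / π, ?_, fun u hu => ?_⟩
  · calc ∑ i, |√2 * w i| = √2 * ∑ i, |w i| := by
          simp only [abs_mul, abs_of_nonneg (sqrt_nonneg 2), Finset.mul_sum]
      _ ≤ √2 * (π * v0) := by gcongr; linarith
      _ = √2 * π * v0 := by ring
  · have hz : π * (u - b) ∈ Icc (n * π) ((n + P) * π) := by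
      obtain ⟨hu₁, hu₂⟩ := abs_le.1 hu
      have := Int.floor_le b
      have := Int.lt_floor_add_one b
      constructor <;> simp only [n, P] <;> push_cast <;> nlinarith
    have hsgn : ∀ i, sgn (u - (b + T i / π)) = sgn (π * (u - b) - T i) := fun i => by
      rw [← sgn_mul_of_pos hπ]
      congr 1
      field_simp
      ring
    simp only [hsgn, mul_assoc, ← Finset.mul_sum, ← mul_sub, abs_mul,
      abs_of_nonneg (sqrt_nonneg 2)]
    calc √2 * |sin (π * (u - b)) - ∑ i, w i * sgn (π * (u - b) - T i)| ≤ √2 * (δ / √2) := by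
          gcongr; exact happrox _ hz
      _ = δ := by field_simp

theorem abs_sum_mul_le_of_mem_cube {d : ℕ} (θ : Fin d → ℝ) {x : Fin d → ℝ}
    (hx : x ∈ cube d) :
    |∑ j, θ j * x j| ≤ ∑ j, |θ j| := by
  refine (Finset.abs_sum_le_sum_abs _ _).trans (Finset.sum_le_sum fun j _ => ?_)
  have hxj := hx j (mem_univ j)
  rw [abs_mul]
  exact mul_le_of_le_one_right (abs_nonneg _) (abs_le.2 hxj)

theorem abs_sub_sum_mul_le {ι : Type*} [Fintype ι] {F δ : ℝ} {c A B : ι → ℝ}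
    (hAB : ∀ k, |A k - B k| ≤ δ) :
    |F - ∑ k, c k * B k| ≤ |F - ∑ k, c k * A k| + (∑ k, |c k|) * δ := calc
  _ = |(F - ∑ k, c k * A k) + ∑ k, c k * (A k - B k)| := by
        congr 1
        simp only [mul_sub, Finset.sum_sub_distrib]
        ring
  _ ≤ |F - ∑ k, c k * A k| + ∑ k, |c k| * δ := by
        refine (abs_add_le _ _).trans (add_le_add_right ?_ _)
        refine (Finset.abs_sum_le_sum_abs _ _).trans (Finset.sum_le_sum fun k _ => ?_)
        rw [abs_mul]
        exact mul_le_mul_of_nonneg_left (hAB k) (abs_nonneg _)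
  _ = |F - ∑ k, c k * A k| + (∑ k, |c k|) * δ := by rw [Finset.sum_mul]

theorem mem_ridgeClass_of_fintype {d : ℕ} {φ : ℝ → ℝ} {v0 v1 : ℝ} {f : (Fin d → ℝ) → ℝ}
    (h : ∀ ε > 0, ∃ (ι : Type) (_ : Fintype ι) (c : ι → ℝ) (θ : ι → Fin d → ℝ) (b : ι → ℝ),
      (∀ k, ∑ j, |θ k j| ≤ v0) ∧ (∑ k, |c k| ≤ v1) ∧
      ∀ x ∈ cube d, |f x - ∑ k, c k * φ ((∑ j, θ k j * x j) - b k)| ≤ ε) :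
    f ∈ RidgeClass d φ v0 v1 := by
  intro ε hε
  obtain ⟨ι, _, c, θ, b, hθ, hc, hf⟩ := h ε hε
  let e := (Fintype.equivFin ι).symm
  refine ⟨_, c ∘ e, θ ∘ e, b ∘ e, fun k => hθ (e k), ?_, fun x hx => ?_⟩
  · simpa only [Function.comp_apply, e.sum_comp fun k => |c k|] using hc
  · simpa only [Function.comp_apply, e.sum_comp fun k => c k * φ ((∑ j, θ k j * x j) - b k)]
      using hf x hx

theorem ridgeClass_subset_of_forall_exists_approx {d : ℕ} {φ ψ : ℝ → ℝ} {v0 v1 C : ℝ}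
    (happrox : ∀ b δ : ℝ, 0 < δ → ∃ (K : ℕ) (w T : Fin K → ℝ), ∑ i, |w i| ≤ C ∧
      ∀ u : ℝ, |u| ≤ v0 → |φ (u - b) - ∑ i, w i * ψ (u - T i)| ≤ δ) :
    RidgeClass d φ v0 v1 ⊆ RidgeClass d ψ v0 (C * v1) := by
  have hC : 0 ≤ C := by
    obtain ⟨K, w, T, hw, -⟩ := happrox 0 1 one_pos
    exact (Finset.sum_nonneg fun i _ => abs_nonneg (w i)).trans hw
  intro f hf
  apply mem_ridgeClass_of_fintype
  intro ε hε
  obtain ⟨m, c, θ, b, hθ, hc, hf⟩ := hf (ε / 2) (half_pos hε)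
  have hv1 : 0 ≤ v1 := (Finset.sum_nonneg fun k _ => abs_nonneg (c k)).trans hc
  set δ := ε / (2 * (v1 + 1))
  have hδ : 0 < δ := div_pos hε (by linarith)
  choose K w T hw happ using fun k => happrox (b k) δ hδ
  refine ⟨(k : Fin m) × Fin (K k), inferInstance, fun p => c p.1 * w p.1 p.2, fun p => θ p.1,
    fun p => T p.1 p.2, fun p => hθ p.1, ?_, fun x hx => ?_⟩
  · rw [Fintype.sum_sigma]
    calc ∑ k, ∑ i, |c k * w k i| = ∑ k, |c k| * ∑ i, |w k i| := by
          simp only [abs_mul, Finset.mul_sum]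
      _ ≤ ∑ k, |c k| * C := by gcongr with k; exact hw k
      _ = (∑ k, |c k|) * C := (Finset.sum_mul ..).symm
      _ ≤ v1 * C := by gcongr
      _ = C * v1 := mul_comm _ _
  · have hu : ∀ k, |∑ j, θ k j * x j| ≤ v0 := fun k =>
      (abs_sum_mul_le_of_mem_cube (θ k) hx).trans (hθ k)
    calc _ = |f x - ∑ k, c k * ∑ i, w k i * ψ ((∑ j, θ k j * x j) - T k i)| := by
          simp only [Fintype.sum_sigma, Finset.mul_sum, mul_assoc]
      _ ≤ ε / 2 + (∑ k, |c k|) * δ :=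
          abs_sub_sum_mul_le (fun k => happ k _ (hu k)) |>.trans (by gcongr; exact hf x hx)
      _ ≤ ε / 2 + (v1 + 1) * δ := by gcongr; linarith
      _ = ε := by simp only [δ]; field_simp; ring

theorem ridgeClass_sgn_subset_one {d : ℕ} {v0 v1 : ℝ} (hv0 : 0 < v0) :
    RidgeClass d sgn v0 v1 ⊆ RidgeClass d sgn 1 v1 := by
  intro f hf ε hε
  obtain ⟨m, c, θ, b, hθ, hc, hf⟩ := hf ε hε
  refine ⟨m, c, fun k j => v0⁻¹ * θ k j, fun k => v0⁻¹ * b k, fun k => ?_, hc, fun x hx => ?_⟩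
  · simp only [abs_mul, abs_inv, abs_of_pos hv0, ← Finset.mul_sum]
    rw [inv_mul_le_iff₀ hv0, mul_one]
    exact hθ k
  · have hsgn : ∀ k, sgn ((∑ j, v0⁻¹ * θ k j * x j) - v0⁻¹ * b k) =
        sgn ((∑ j, θ k j * x j) - b k) := fun k => by
      rw [← sgn_mul_of_pos (inv_pos.2 hv0) ((∑ j, θ k j * x j) - b k), mul_sub, Finset.mul_sum]
      simp only [mul_assoc]
    simpa only [hsgn] using hf x hx

theorem sine_class_subset_sgn_class_general (d v0 : ℕ) (hv0 : 0 < v0) (v1 : ℝ) :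
    RidgeClass d (fun z => Real.sqrt 2 * Real.sin (π * z)) v0 v1 ⊆
      RidgeClass d sgn 1 (Real.sqrt 2 * π * v0 * v1) :=
  (ridgeClass_subset_of_forall_exists_approx fun b _ hδ =>
    exists_sgn_sum_approx_sqrt_two_sin hv0 b hδ).trans (ridgeClass_sgn_subset_one (by positivity))

/-- Inclusion of the sinusoidal class in the signum class:
`F_{v0, v1, √2 sin(π·)} ⊆ F_{1, √2·π·v0·v1, sgn}`. -/
theorem sine_class_subset_sgn_class (d v0 : ℕ) (hd : 0 < d) (hv0 : 0 < v0)
    (v1 : ℝ) (hv1 : 0 < v1) :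
    RidgeClass d (fun z => Real.sqrt 2 * Real.sin (π * z)) v0 v1 ⊆
      RidgeClass d sgn 1 (Real.sqrt 2 * π * v0 * v1) :=
  sine_class_subset_sgn_class_general d v0 hv0 v1

end
end
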